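/- arXiv:math/0512622 — 5 statements merged into one kernel-verified Lean document; each statement's English description precedes it below -/
import Mathlib

section
/- In a Euclidean triangle with all side lengths at most D, the maximal distance from a point on one side to the union of the other two sides is at most √3·D/4, with equality for the equilateral triangle of side D (where the maximum equals half the altitude). -/
open Set Metric

set_option maxHeartbeats 1000000

noncomputable section

abbrev E2 := EuclideanSpace ℝ (Fin 2)

open RealInnerProductSpace in
lemma key_alg (D t A B P d1 d2 : ℝ) (hD : 0 < D)
    (hA : A ≤ D^2) (hB : B ≤ D^2) (hC : A - 2*P + B ≤ D^2)
    (ht0 : 0 ≤ t) (ht1 : t ≤ 1)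
    (hd1 : d1^2 = t^2*(A - P + B/4))
    (hd2 : d2^2 = (1-t)^2*(A/4 + P/2 + B/4))
    (h1 : 0 ≤ d1) (h2 : 0 ≤ d2) :
    d1 ≤ Real.sqrt 3 * D / 4 ∨ d2 ≤ Real.sqrt 3 * D / 4 := by
  have h3 : Real.sqrt 3 ^ 2 = 3 := Real.sq_sqrt (by norm_num)
  have hs3 : 0 < Real.sqrt 3 := Real.sqrt_pos.2 (by norm_num)
  by_contra h
  push_neg at h
  obtain ⟨g1, g2⟩ := h
  have hpos : (0:ℝ) ≤ Real.sqrt 3 * D / 4 := by positivity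
  have expand : (Real.sqrt 3 * D / 4)^2 = 3 * D^2 / 16 := by
    rw [div_pow, mul_pow, h3]; ring
  have e1 : 3*D^2/16 < d1^2 := by
    have := mul_self_lt_mul_self hpos g1
    nlinarith [this, expand]
  have e2 : 3*D^2/16 < d2^2 := by
    have := mul_self_lt_mul_self hpos g2
    nlinarith [this, expand]
  rw [hd1] at e1
  rw [hd2] at e2
  rcases eq_or_lt_of_le ht0 with h0 | h0
  · rw [← h0] at e1; nlinarith [sq_nonneg D]
  rcases eq_or_lt_of_le ht1 with h1' | h1'
  · rw [h1'] at e2; nlinarith [sq_nonneg D]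
  have E1 := mul_lt_mul_of_pos_left e1 (pow_pos (by linarith : (0:ℝ) < 1 - t) 2)
  have E2 := mul_lt_mul_of_pos_left e2 (pow_pos h0 2)
  have hK : (A - P + B/4) + (A/4 + P/2 + B/4) ≤ 3/2*D^2 := by linarith
  have Kb := mul_le_mul_of_nonneg_left hK (sq_nonneg (t*(1-t)))
  have hw : (0:ℝ) ≤ 3 - (2*t-1)^2 := by nlinarith [mul_nonneg ht0 (by linarith : (0:ℝ) ≤ 1 - t)]
  have W : (0:ℝ) ≤ D^2 * (2*t-1)^2 * (3 - (2*t-1)^2) :=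
    mul_nonneg (mul_nonneg (sq_nonneg D) (sq_nonneg (2*t-1))) hw
  linarith [E1, E2, Kb, W]

open RealInnerProductSpace in
lemma part1 (D : ℝ) (hD : 0 < D) (a b c p : E2) (hab : dist a b ≤ D)
    (hbc : dist b c ≤ D) (hac : dist a c ≤ D) (hp : p ∈ segment ℝ a b) :
    Metric.infDist p (segment ℝ b c ∪ segment ℝ a c) ≤ Real.sqrt 3 * D / 4 := by
  rw [segment_eq_image'] at hp
  obtain ⟨t, ⟨ht0, ht1⟩, rfl⟩ := hp
  set u := b - a with hu
  set v := c - a with hv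
  set q1 := a + (t/2) • v with hq1def
  set q2 := b + ((1-t)/2) • (c - b) with hq2def
  have hq1 : q1 ∈ segment ℝ a c := by
    rw [segment_eq_image']
    exact ⟨t/2, ⟨by linarith, by linarith⟩, rfl⟩
  have hq2 : q2 ∈ segment ℝ b c := by
    rw [segment_eq_image']
    exact ⟨(1-t)/2, ⟨by linarith, by linarith⟩, rfl⟩
  set A := ‖u‖^2 with hA
  set B := ‖v‖^2 with hB
  set P := ⟪u, v⟫ with hP
  have hAle : A ≤ D^2 := by
    have : ‖u‖ = dist b a := (dist_eq_norm b a).symm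
    rw [hA, this, dist_comm]
    exact pow_le_pow_left₀ dist_nonneg hab 2
  have hBle : B ≤ D^2 := by
    have : ‖v‖ = dist c a := (dist_eq_norm c a).symm
    rw [hB, this, dist_comm]
    exact pow_le_pow_left₀ dist_nonneg hac 2
  have hCle : A - 2*P + B ≤ D^2 := by
    have h1 : ‖u - v‖ = dist b c := by
      rw [hu, hv, dist_eq_norm]
      congr 1
      abel
    have h2 : ‖u - v‖^2 = A - 2*P + B := by
      rw [norm_sub_sq_real]; try ring
    have h4 : dist b c ^ 2 ≤ D ^ 2 := pow_le_pow_left₀ dist_nonneg hbc 2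
    rw [← h1, h2] at h4
    exact h4
  have hd1 : dist (a + t • u) q1 ^ 2 = t^2*(A - P + B/4) := by
    have hx : a + t • u - q1 = t • u - (t/2) • v := by
      rw [hq1def]; abel
    rw [dist_eq_norm, hx, norm_sub_sq_real, norm_smul, norm_smul,
      real_inner_smul_left, real_inner_smul_right]
    simp only [Real.norm_eq_abs, mul_pow, sq_abs]
    ring
  have hd2 : dist (a + t • u) q2 ^ 2 = (1-t)^2*(A/4 + P/2 + B/4) := by
    have hx : a + t • u - q2 = ((t-1)/2) • u + ((t-1)/2) • v := by
      rw [hq2def, hu, hv]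
      module
    rw [dist_eq_norm, hx, norm_add_sq_real, norm_smul, norm_smul,
      real_inner_smul_left, real_inner_smul_right]
    simp only [Real.norm_eq_abs, mul_pow, sq_abs]
    ring
  have key := key_alg D t A B P (dist (a + t • u) q1) (dist (a + t • u) q2) hD
    hAle hBle hCle ht0 ht1 hd1 hd2 dist_nonneg dist_nonneg
  rcases key with h | h
  · exact le_trans (infDist_le_dist_of_mem (mem_union_right _ hq1)) h
  · exact le_trans (infDist_le_dist_of_mem (mem_union_left _ hq2)) h

/-- In a Euclidean triangle with all sides of length at most `D`, every point of one
side is within `√3·D/4` of the union of the other two sides, and this bound is attained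
for the equilateral triangle of side `D` (half the altitude). -/
theorem triangle_thin_constant (D : ℝ) (hD : 0 < D) :
    (∀ a b c p : E2, dist a b ≤ D → dist b c ≤ D → dist a c ≤ D →
      p ∈ segment ℝ a b →
      Metric.infDist p (segment ℝ b c ∪ segment ℝ a c) ≤ Real.sqrt 3 * D / 4) ∧
    (∃ a b c : E2, dist a b = D ∧ dist b c = D ∧ dist a c = D ∧
      ∃ p ∈ segment ℝ a b,
        Metric.infDist p (segment ℝ b c ∪ segment ℝ a c) = Real.sqrt 3 * D / 4) := by
  have h3 : Real.sqrt 3 ^ 2 = 3 := Real.sq_sqrt (by norm_num)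
  have hs3 : 0 < Real.sqrt 3 := Real.sqrt_pos.2 (by norm_num)
  refine ⟨part1 D hD, ?_⟩
  set a : E2 := (WithLp.equiv 2 (Fin 2 → ℝ)).symm ![0, 0] with ha
  set b : E2 := (WithLp.equiv 2 (Fin 2 → ℝ)).symm ![D, 0] with hb
  set c : E2 := (WithLp.equiv 2 (Fin 2 → ℝ)).symm ![D/2, Real.sqrt 3 * D/2] with hc
  set p : E2 := (WithLp.equiv 2 (Fin 2 → ℝ)).symm ![D/2, 0] with hp
  have hdist : ∀ x y : E2, dist x y = Real.sqrt ((x 0 - y 0)^2 + (x 1 - y 1)^2) := by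
    intro x y
    rw [EuclideanSpace.dist_eq, Fin.sum_univ_two]
    norm_num [Real.dist_eq, sq_abs]
  have hab : dist a b = D := by
    rw [hdist]
    simp only [ha, hb, WithLp.equiv_symm_apply, PiLp.toLp_apply]
    norm_num
    exact Real.sqrt_sq hD.le
  have hbc : dist b c = D := by
    rw [hdist]
    simp only [hb, hc, WithLp.equiv_symm_apply, PiLp.toLp_apply]
    norm_num
    rw [show (D - D/2)^2 + (Real.sqrt 3 * D/2)^2 = D^2 by nlinarith, Real.sqrt_sq hD.le]
  have hac : dist a c = D := by
    rw [hdist]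
    simp only [ha, hc, WithLp.equiv_symm_apply, PiLp.toLp_apply]
    norm_num
    rw [show (D/2)^2 + (Real.sqrt 3 * D/2)^2 = D^2 by nlinarith, Real.sqrt_sq hD.le]
  have hpmem : p ∈ segment ℝ a b := by
    refine ⟨1/2, 1/2, by norm_num, by norm_num, by norm_num, ?_⟩
    apply (WithLp.equiv 2 (Fin 2 → ℝ)).injective
    funext i
    fin_cases i <;>
      simp [ha, hb, hp, PiLp.add_apply, PiLp.smul_apply] <;> ring
  refine ⟨a, b, c, hab, hbc, hac, p, hpmem, ?_⟩
  apply le_antisymm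
  · exact part1 D hD a b c p hab.le hbc.le hac.le hpmem
  · by_contra hlt
    push_neg at hlt
    have hne : (segment ℝ b c ∪ segment ℝ a c).Nonempty :=
      ⟨b, mem_union_left _ (left_mem_segment ℝ b c)⟩
    rw [infDist_lt_iff hne] at hlt
    obtain ⟨q, hq, hqd⟩ := hlt
    have hlow : Real.sqrt 3 * D / 4 ≤ dist p q := by
      have hsq : Real.sqrt 3 * D / 4 = Real.sqrt (3 * D^2 / 16) := by
        rw [show 3 * D^2/16 = (Real.sqrt 3 * D/4)^2 by nlinarith, Real.sqrt_sq (by positivity)]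
      rcases hq with hq | hq
      · rw [segment_eq_image'] at hq
        obtain ⟨s, ⟨hs0, hs1⟩, rfl⟩ := hq
        rw [hdist, hsq]
        apply Real.sqrt_le_sqrt
        simp only [hp, hb, hc, WithLp.equiv_symm_apply, PiLp.toLp_apply, PiLp.add_apply, PiLp.smul_apply,
          PiLp.sub_apply, smul_eq_mul]
        norm_num
        nlinarith [sq_nonneg (4*s - 1), sq_nonneg D, sq_nonneg (D*(4*s-1))]
      · rw [segment_eq_image'] at hq
        obtain ⟨s, ⟨hs0, hs1⟩, rfl⟩ := hq
        rw [hdist, hsq]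
        apply Real.sqrt_le_sqrt
        simp only [hp, ha, hc, WithLp.equiv_symm_apply, PiLp.toLp_apply, PiLp.add_apply, PiLp.smul_apply,
          PiLp.sub_apply, smul_eq_mul]
        norm_num
        nlinarith [sq_nonneg (4*s - 1), sq_nonneg D, sq_nonneg (D*(4*s-1))]
    exact absurd hqd (not_lt.2 hlow)

end
end

section
/- Let p, r be two points in the plane and let a be a point not on segment [p,r]. Then for every point x ≠ a on the tangent line at a to the ellipse with foci p and r passing through a, one has d(x,p) + d(x,r) > d(a,p) + d(a,r). -/
open Set Metric

noncomputable section

/-- Let `a` be a point not on the segment `[p,r]`, and let the tangent line at `a` to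
the ellipse `{x | d(x,p)+d(x,r) = d(a,p)+d(a,r)}` be given as the level line
`{x | f x = f a}` of a supporting linear functional `f` of the convex region
`{x | d(x,p)+d(x,r) ≤ d(a,p)+d(a,r)}`. Then every point `x ≠ a` on the tangent line
satisfies `d(x,p)+d(x,r) > d(a,p)+d(a,r)`. -/
theorem tangent_line_ellipse_strict (p r a : E2) (ha : a ∉ segment ℝ p r)
    (f : E2 →ₗ[ℝ] ℝ) (hf : f ≠ 0)
    (hsupp : ∀ x : E2, dist x p + dist x r ≤ dist a p + dist a r → f x ≤ f a)
    (x : E2) (hx : f x = f a) (hxa : x ≠ a) :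
    dist a p + dist a r < dist x p + dist x r := by
  by_contra hcon
  push_neg at hcon
  set s : ℝ := dist a p + dist a r with hs
  have hap : a ≠ p := fun h => ha (h ▸ left_mem_segment ℝ p r)
  have har : a ≠ r := fun h => ha (h ▸ right_mem_segment ℝ p r)
  have hu1 : a - p ≠ 0 := sub_ne_zero.2 hap
  have hu2 : a - r ≠ 0 := sub_ne_zero.2 har
  set m : E2 := (1/2 : ℝ) • (a + x) with hm
  have hmp : m - p = (1/2 : ℝ) • ((a - p) + (x - p)) := by
    rw [hm]; module
  have hmr : m - r = (1/2 : ℝ) • ((a - r) + (x - r)) := by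
    rw [hm]; module
  -- key strict bound at the midpoint
  have hmid : dist m p + dist m r < s := by
    have h1 : dist m p = ‖(a - p) + (x - p)‖ / 2 := by
      rw [dist_eq_norm, hmp, norm_smul]
      simp [abs_of_nonneg]; ring
    have h2 : dist m r = ‖(a - r) + (x - r)‖ / 2 := by
      rw [dist_eq_norm, hmr, norm_smul]
      simp [abs_of_nonneg]; ring
    have t1 : ‖(a - p) + (x - p)‖ ≤ ‖a - p‖ + ‖x - p‖ := norm_add_le _ _
    have t2 : ‖(a - r) + (x - r)‖ ≤ ‖a - r‖ + ‖x - r‖ := norm_add_le _ _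
    have hdx : dist x p + dist x r = ‖x - p‖ + ‖x - r‖ := by
      rw [dist_eq_norm, dist_eq_norm]
    have hda : s = ‖a - p‖ + ‖a - r‖ := by
      rw [hs, dist_eq_norm, dist_eq_norm]
    rcases lt_or_eq_of_le hcon with hlt | heq
    · rw [h1, h2]
      rw [hdx] at hlt; rw [hda]
      linarith
    · -- sum at x equals s; then one of the triangle inequalities is strict
      have hkey : ‖(a - p) + (x - p)‖ < ‖a - p‖ + ‖x - p‖ ∨
          ‖(a - r) + (x - r)‖ < ‖a - r‖ + ‖x - r‖ := by
        by_contra hne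
        push_neg at hne
        have e1 : ‖(a - p) + (x - p)‖ = ‖a - p‖ + ‖x - p‖ := le_antisymm t1 hne.1
        have e2 : ‖(a - r) + (x - r)‖ = ‖a - r‖ + ‖x - r‖ := le_antisymm t2 hne.2
        have r1 : SameRay ℝ (a - p) (x - p) := sameRay_iff_norm_add.2 e1
        have r2 : SameRay ℝ (a - r) (x - r) := sameRay_iff_norm_add.2 e2
        obtain ⟨c₁, hc₁, hw1⟩ := r1.exists_nonneg_left hu1
        obtain ⟨c₂, hc₂, hw2⟩ := r2.exists_nonneg_left hu2
        have hxa1 : x - a = (c₁ - 1) • (a - p) := by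
          have : x - a = (x - p) - (a - p) := by abel
          rw [this, ← hw1]; module
        have hxa2 : x - a = (c₂ - 1) • (a - r) := by
          have : x - a = (x - r) - (a - r) := by abel
          rw [this, ← hw2]; module
        have hxane : x - a ≠ 0 := sub_ne_zero.2 hxa
        have hc₁ne : c₁ - 1 ≠ 0 := by
          intro h; rw [h, zero_smul] at hxa1; exact hxane hxa1
        have hc₂ne : c₂ - 1 ≠ 0 := by
          intro h; rw [h, zero_smul] at hxa2; exact hxane hxa2
        set lam : ℝ := (c₁ - 1) / (c₂ - 1) with hlam
        have hu2eq : a - r = lam • (a - p) := by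
          have h := hxa1.symm.trans hxa2
          rw [hlam]
          have := smul_smul ((c₂ - 1)⁻¹) (c₂ - 1) (a - r)
          rw [inv_mul_cancel₀ hc₂ne, one_smul] at this
          rw [← this, ← h, smul_smul, div_eq_mul_inv, mul_comm]
        have hlampos : 0 < lam := by
          by_contra hl
          push_neg at hl
          apply ha
          rw [mem_segment_iff_sameRay]
          have : r - a = (-lam) • (a - p) := by
            rw [neg_smul, ← hu2eq]; abel
          rw [this]
          exact SameRay.sameRay_nonneg_smul_right (a - p) (by linarith)
        -- derive c₂ = 1 and contradiction
        have hnorm2 : ‖a - r‖ = lam * ‖a - p‖ := by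
          rw [hu2eq, norm_smul, Real.norm_eq_abs, abs_of_pos hlampos]
        have hsum : c₁ * ‖a - p‖ + c₂ * ‖a - r‖ = ‖a - p‖ + ‖a - r‖ := by
          have hx1 : ‖x - p‖ = c₁ * ‖a - p‖ := by
            rw [← hw1, norm_smul, Real.norm_eq_abs, abs_of_nonneg hc₁]
          have hx2 : ‖x - r‖ = c₂ * ‖a - r‖ := by
            rw [← hw2, norm_smul, Real.norm_eq_abs, abs_of_nonneg hc₂]
          rw [hdx, hda] at heq
          rw [← hx1, ← hx2, heq]
        have hc12 : c₁ - 1 = lam * (c₂ - 1) := by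
          rw [hlam, div_mul_cancel₀ _ hc₂ne]
        have hnp : 0 < ‖a - p‖ := norm_pos_iff.2 hu1
        have hnr : 0 < ‖a - r‖ := norm_pos_iff.2 hu2
        -- (c₁-1)‖a-p‖ + (c₂-1)‖a-r‖ = 0, with c₁-1 = lam (c₂-1)
        have : (c₂ - 1) * (lam * ‖a - p‖ + ‖a - r‖) = 0 := by
          linear_combination hsum - ‖a - p‖ * hc12
        have hpos : 0 < lam * ‖a - p‖ + ‖a - r‖ := by positivity
        have : c₂ - 1 = 0 := by
          rcases mul_eq_zero.1 this with h | h
          · exact h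
          · exact absurd h (ne_of_gt hpos)
        exact hc₂ne this
      rw [hdx] at heq
      rw [h1, h2, hda]
      rcases hkey with h | h
      · rw [hda] at heq; linarith
      · rw [hda] at heq; linarith
  -- perturbation argument
  obtain ⟨u, hu⟩ : ∃ u, f u ≠ 0 := by
    by_contra h
    push_neg at h
    exact hf (LinearMap.ext fun y => by simp [h y])
  set v : E2 := (f u)⁻¹ • u with hv
  have hfv : f v = 1 := by
    rw [hv, map_smul, smul_eq_mul, inv_mul_cancel₀ hu]
  have hvne : v ≠ 0 := by
    intro h; rw [h, map_zero] at hfv; exact one_ne_zero hfv.symm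
  have hnv : 0 < ‖v‖ := norm_pos_iff.2 hvne
  set ε : ℝ := (s - (dist m p + dist m r)) / (2 * ‖v‖) with hε
  have hεpos : 0 < ε := by
    apply div_pos (by linarith) (by positivity)
  set y : E2 := m + ε • v with hy
  have hdy : dist y p + dist y r ≤ s := by
    have d1 : dist y p ≤ dist m p + ε * ‖v‖ := by
      calc dist y p ≤ dist y m + dist m p := dist_triangle y m p
        _ = ε * ‖v‖ + dist m p := by
            rw [hy, dist_eq_norm]
            simp [norm_smul, abs_of_pos hεpos]
        _ = dist m p + ε * ‖v‖ := by ring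
    have d2 : dist y r ≤ dist m r + ε * ‖v‖ := by
      calc dist y r ≤ dist y m + dist m r := dist_triangle y m r
        _ = ε * ‖v‖ + dist m r := by
            rw [hy, dist_eq_norm]
            simp [norm_smul, abs_of_pos hεpos]
        _ = dist m r + ε * ‖v‖ := by ring
    have : ε * ‖v‖ = (s - (dist m p + dist m r)) / 2 := by
      rw [hε]; field_simp
    linarith
  have hfy : f y = f a + ε := by
    simp only [hy, hm, map_add, map_smul, smul_eq_mul, hfv, hx]
    ring
  have := hsupp y hdy
  rw [hfy] at this
  linarith

end
end

section
/- In the Euclidean plane, if K₁ ⊆ K₂ are compact convex sets, then the length of the boundary of K₁ is at most the length of the boundary of K₂ (monotonicity of perimeter under inclusion of convex bodies). -/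
open Set Metric MeasureTheory RealInnerProductSpace

noncomputable section

namespace PerimAux

variable {K : Set E2}

def proj (hne : K.Nonempty) (hcl : IsClosed K) (hconv : Convex ℝ K) (u : E2) : E2 :=
  (exists_norm_eq_iInf_of_complete_convex hne hcl.isComplete hconv u).choose

theorem proj_mem (hne : K.Nonempty) (hcl : IsClosed K) (hconv : Convex ℝ K) (u : E2) :
    proj hne hcl hconv u ∈ K :=
  (exists_norm_eq_iInf_of_complete_convex hne hcl.isComplete hconv u).choose_spec.1

theorem proj_inner_le (hne : K.Nonempty) (hcl : IsClosed K) (hconv : Convex ℝ K) (u : E2) :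
    ∀ w ∈ K, ⟪u - proj hne hcl hconv u, w - proj hne hcl hconv u⟫ ≤ 0 := by
  have h := (exists_norm_eq_iInf_of_complete_convex hne hcl.isComplete hconv u).choose_spec
  exact (norm_eq_iInf_iff_real_inner_le_zero hconv h.1).1 h.2

theorem proj_unique (hne : K.Nonempty) (hcl : IsClosed K) (hconv : Convex ℝ K) {u v : E2}
    (hv : v ∈ K) (h : ∀ w ∈ K, ⟪u - v, w - v⟫ ≤ 0) : proj hne hcl hconv u = v := by
  set p := proj hne hcl hconv u with hp
  have h1 : ⟪u - p, v - p⟫ ≤ 0 := proj_inner_le hne hcl hconv u v hv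
  have h2 : ⟪u - v, p - v⟫ ≤ 0 := h p (proj_mem hne hcl hconv u)
  have key : ⟪p - v, p - v⟫ ≤ 0 := by
    have expand : ⟪p - v, p - v⟫ = ⟪u - p, v - p⟫ + ⟪u - v, p - v⟫ := by
      simp only [inner_sub_left, inner_sub_right]
      rw [real_inner_comm v p, real_inner_comm v u, real_inner_comm p u]
      ring
    linarith
  have : ‖p - v‖ ^ 2 ≤ 0 := by rwa [← real_inner_self_eq_norm_sq]
  have : p - v = 0 := by
    have := norm_nonneg (p - v)
    have hn : ‖p - v‖ = 0 := by nlinarith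
    exact norm_eq_zero.mp hn
  exact sub_eq_zero.mp this
theorem proj_eq_self (hne : K.Nonempty) (hcl : IsClosed K) (hconv : Convex ℝ K) {u : E2}
    (hu : u ∈ K) : proj hne hcl hconv u = u :=
  proj_unique hne hcl hconv hu (fun w _ => by simp)

theorem proj_lipschitz (hne : K.Nonempty) (hcl : IsClosed K) (hconv : Convex ℝ K) :
    LipschitzWith 1 (proj hne hcl hconv) := by
  rw [lipschitzWith_iff_dist_le_mul]
  intro u v
  set p := proj hne hcl hconv u
  set q := proj hne hcl hconv v
  have h1 : ⟪u - p, q - p⟫ ≤ 0 := proj_inner_le hne hcl hconv u q (proj_mem hne hcl hconv v)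
  have h2 : ⟪v - q, p - q⟫ ≤ 0 := proj_inner_le hne hcl hconv v p (proj_mem hne hcl hconv u)
  have key : ⟪p - q, p - q⟫ ≤ ⟪u - v, p - q⟫ := by
    have expand : ⟪p - q, p - q⟫ - ⟪u - v, p - q⟫ = ⟪u - p, q - p⟫ + ⟪v - q, p - q⟫ := by
      simp only [inner_sub_left, inner_sub_right]
      rw [real_inner_comm q p, real_inner_comm q u, real_inner_comm p u, real_inner_comm q v,
        real_inner_comm p v]
      ring
    linarith
  have hcs : ⟪u - v, p - q⟫ ≤ ‖u - v‖ * ‖p - q‖ := real_inner_le_norm _ _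
  have hsq : ‖p - q‖ ^ 2 ≤ ‖u - v‖ * ‖p - q‖ := by
    rw [← real_inner_self_eq_norm_sq]; linarith
  have : ‖p - q‖ ≤ ‖u - v‖ := by nlinarith [norm_nonneg (p - q), norm_nonneg (u - v)]
  simpa [dist_eq_norm] using this
theorem exists_support (hne : K.Nonempty) (hcl : IsClosed K) (hconv : Convex ℝ K) {x : E2}
    (hx : x ∈ frontier K) : ∃ v : E2, ‖v‖ = 1 ∧ ∀ z ∈ K, ⟪v, z - x⟫ ≤ 0 := by
  have hxK : x ∈ K := hcl.closure_eq ▸ (frontier_subset_closure hx)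
  have hxc : x ∈ closure Kᶜ := by
    rw [frontier_eq_closure_inter_closure] at hx; exact hx.2
  obtain ⟨u, hu, hul⟩ := mem_closure_iff_seq_limit.mp hxc
  set p : ℕ → E2 := fun n => proj hne hcl hconv (u n) with hpdef
  have hne' : ∀ n, u n - p n ≠ 0 := fun n => by
    intro h
    exact hu n (sub_eq_zero.mp h ▸ proj_mem hne hcl hconv (u n))
  set v : ℕ → E2 := fun n => ‖u n - p n‖⁻¹ • (u n - p n) with hvdef
  have hvs : ∀ n, v n ∈ sphere (0 : E2) 1 := fun n => by
    simp [hvdef, norm_smul, norm_ne_zero_iff.mpr (hne' n), inv_mul_cancel₀]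
  obtain ⟨w, hw, φ, hφ, hconv_seq⟩ := (isCompact_sphere (0 : E2) 1).tendsto_subseq hvs
  refine ⟨w, by simpa using hw, fun z hz => ?_⟩
  have hptend : Filter.Tendsto (fun n => p (φ n)) Filter.atTop (nhds x) := by
    have hx' : proj hne hcl hconv x = x := proj_eq_self hne hcl hconv hxK
    have := ((proj_lipschitz hne hcl hconv).continuous.tendsto x).comp
      (hul.comp hφ.tendsto_atTop)
    simpa [hx', Function.comp_def] using this
  have htend : Filter.Tendsto (fun n => ⟪v (φ n), z - p (φ n)⟫) Filter.atTop
      (nhds ⟪w, z - x⟫) :=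
    hconv_seq.inner (Filter.Tendsto.const_sub z hptend)
  refine le_of_tendsto htend (Filter.Eventually.of_forall fun n => ?_)
  have h0 : ⟪u (φ n) - p (φ n), z - p (φ n)⟫ ≤ 0 :=
    proj_inner_le hne hcl hconv (u (φ n)) z hz
  have hpos : (0:ℝ) < ‖u (φ n) - p (φ n)‖⁻¹ :=
    inv_pos.mpr (norm_pos_iff.mpr (hne' (φ n)))
  calc ⟪v (φ n), z - p (φ n)⟫ = ‖u (φ n) - p (φ n)‖⁻¹ * ⟪u (φ n) - p (φ n), z - p (φ n)⟫ :=
        real_inner_smul_left _ _ _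
    _ ≤ 0 := mul_nonpos_of_nonneg_of_nonpos hpos.le h0
theorem exists_ray_frontier {K : Set E2} (hc : IsCompact K) {x v : E2} (hx : x ∈ K)
    (hv : ‖v‖ = 1) : ∃ T : ℝ, 0 ≤ T ∧ x + T • v ∈ frontier K := by
  set S : Set ℝ := {t | 0 ≤ t ∧ x + t • v ∈ K} with hS
  have hS0 : (0:ℝ) ∈ S := ⟨le_refl 0, by simpa using hx⟩
  obtain ⟨R, hR⟩ := hc.isBounded.subset_closedBall 0
  have hbdd : BddAbove S := by
    refine ⟨‖x‖ + R, fun t ht => ?_⟩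
    have h1 : ‖x + t • v‖ ≤ R := by simpa [Metric.mem_closedBall, dist_eq_norm] using hR ht.2
    have h2 : ‖t • v‖ ≤ ‖x + t • v‖ + ‖x‖ := by
      simpa using norm_sub_le (x + t • v) x
    have h3 : ‖t • v‖ = t := by rw [norm_smul, hv, Real.norm_eq_abs, abs_of_nonneg ht.1, mul_one]
    linarith
  have hclosed : IsClosed S := by
    have hcont : Continuous fun t : ℝ => x + t • v := by continuity
    exact (isClosed_le continuous_const continuous_id).inter (hc.isClosed.preimage hcont)
  have hTmem : sSup S ∈ S := hclosed.csSup_mem ⟨0, hS0⟩ hbdd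
  refine ⟨sSup S, hTmem.1, ?_⟩
  rw [frontier, hc.isClosed.closure_eq]
  refine ⟨hTmem.2, fun hint => ?_⟩
  obtain ⟨ε, hε, hball⟩ := Metric.isOpen_iff.mp isOpen_interior _ hint
  have hmem : x + (sSup S + ε / 2) • v ∈ K := by
    refine interior_subset (hball ?_)
    have : dist (x + (sSup S + ε / 2) • v) (x + sSup S • v) = ε / 2 := by
      rw [dist_eq_norm]
      have : x + (sSup S + ε / 2) • v - (x + sSup S • v) = (ε / 2) • v := by
        rw [add_smul]; abel
      rw [this, norm_smul, hv, Real.norm_eq_abs, abs_of_pos (by linarith), mul_one]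
    rw [Metric.mem_ball, this]; linarith
  have : sSup S + ε / 2 ∈ S := ⟨by linarith [hTmem.1], hmem⟩
  have := le_csSup hbdd this
  linarith

end PerimAux

/-- Monotonicity of perimeter: if `K₁ ⊆ K₂` are compact convex subsets of the plane,
the one-dimensional Hausdorff measure of the boundary of `K₁` is at most that of the
boundary of `K₂`. -/
theorem perimeter_mono (K₁ K₂ : Set E2)
    (h₁c : IsCompact K₁) (h₁ : Convex ℝ K₁)
    (h₂c : IsCompact K₂) (h₂ : Convex ℝ K₂)
    (hsub : K₁ ⊆ K₂) :
    MeasureTheory.Measure.hausdorffMeasure 1 (frontier K₁) ≤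
      MeasureTheory.Measure.hausdorffMeasure 1 (frontier K₂) := by
  rcases K₁.eq_empty_or_nonempty with h | hne
  · simp [h]
  set f := PerimAux.proj hne h₁c.isClosed h₁ with hf
  have hcover : frontier K₁ ⊆ f '' frontier K₂ := by
    intro x hx
    obtain ⟨v, hv1, hvsupp⟩ := PerimAux.exists_support hne h₁c.isClosed h₁ hx
    have hxK₁ : x ∈ K₁ := h₁c.isClosed.closure_eq ▸ frontier_subset_closure hx
    obtain ⟨T, hT0, hyT⟩ := PerimAux.exists_ray_frontier h₂c (hsub hxK₁) hv1
    refine ⟨x + T • v, hyT, ?_⟩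
    apply PerimAux.proj_unique hne h₁c.isClosed h₁ hxK₁
    intro w hw
    have he : x + T • v - x = T • v := by abel
    rw [he, real_inner_smul_left]
    exact mul_nonpos_of_nonneg_of_nonpos hT0 (hvsupp w hw)
  calc MeasureTheory.Measure.hausdorffMeasure 1 (frontier K₁)
      ≤ MeasureTheory.Measure.hausdorffMeasure 1 (f '' frontier K₂) := measure_mono hcover
    _ ≤ (1 : ENNReal) ^ (1:ℝ) * MeasureTheory.Measure.hausdorffMeasure 1 (frontier K₂) := by
        simpa using (PerimAux.proj_lipschitz hne h₁c.isClosed h₁).hausdorffMeasure_image_le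
          zero_le_one (frontier K₂)
    _ = MeasureTheory.Measure.hausdorffMeasure 1 (frontier K₂) := by simp

end
end

section
/- Let X be the set of points of a Jordan domain J joined to some fixed interior point by a rectifiable curve in J, equipped with the induced length metric. Then X is a complete metric space. -/
open Set Metric
open scoped ENNReal

noncomputable section

/-- A geodesic segment parametrized by arclength on `[a,b]`. -/
def IsGeodesicSeg {X : Type*} [MetricSpace X] (γ : ℝ → X) (a b : ℝ) : Prop :=
  ∀ s ∈ Set.Icc a b, ∀ t ∈ Set.Icc a b, dist (γ s) (γ t) = |s - t|

/-- A geodesic ray parametrized by arclength on `[0,∞)`. -/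
def IsGeodesicRay {X : Type*} [MetricSpace X] (γ : ℝ → X) : Prop :=
  ∀ s ∈ Set.Ici (0:ℝ), ∀ t ∈ Set.Ici (0:ℝ), dist (γ s) (γ t) = |s - t|

/-- A geodesic triangle: three arclength geodesic sides joining vertices `p q r`. -/
structure GeodesicTriangle (X : Type*) [MetricSpace X] where
  p : X
  q : X
  r : X
  side₁ : ℝ → X
  side₂ : ℝ → X
  side₃ : ℝ → X
  geo₁ : IsGeodesicSeg side₁ 0 (dist p q)
  geo₂ : IsGeodesicSeg side₂ 0 (dist q r)
  geo₃ : IsGeodesicSeg side₃ 0 (dist r p)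
  s₁0 : side₁ 0 = p
  s₁1 : side₁ (dist p q) = q
  s₂0 : side₂ 0 = q
  s₂1 : side₂ (dist q r) = r
  s₃0 : side₃ 0 = r
  s₃1 : side₃ (dist r p) = p

/-- Thinness: distances between points on the sides are bounded by distances
between the corresponding comparison points on a Euclidean comparison triangle. -/
def Thin {X : Type*} [MetricSpace X] (T : GeodesicTriangle X) : Prop :=
  ∀ p' q' r' : E2,
    dist p' q' = dist T.p T.q → dist q' r' = dist T.q T.r → dist r' p' = dist T.r T.p →
    (∀ s ∈ Set.Icc (0:ℝ) (dist T.p T.q), ∀ t ∈ Set.Icc (0:ℝ) (dist T.q T.r),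
      dist (T.side₁ s) (T.side₂ t) ≤
        dist (AffineMap.lineMap p' q' (s / dist T.p T.q))
             (AffineMap.lineMap q' r' (t / dist T.q T.r))) ∧
    (∀ s ∈ Set.Icc (0:ℝ) (dist T.q T.r), ∀ t ∈ Set.Icc (0:ℝ) (dist T.r T.p),
      dist (T.side₂ s) (T.side₃ t) ≤
        dist (AffineMap.lineMap q' r' (s / dist T.q T.r))
             (AffineMap.lineMap r' p' (t / dist T.r T.p))) ∧
    (∀ s ∈ Set.Icc (0:ℝ) (dist T.r T.p), ∀ t ∈ Set.Icc (0:ℝ) (dist T.p T.q),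
      dist (T.side₃ s) (T.side₁ t) ≤
        dist (AffineMap.lineMap r' p' (s / dist T.r T.p))
             (AffineMap.lineMap p' q' (t / dist T.p T.q)))

/-- A geodesic metric space: every pair of points is joined by an arclength geodesic. -/
def GeodesicSpace (X : Type*) [MetricSpace X] : Prop :=
  ∀ x y : X, ∃ γ : ℝ → X, IsGeodesicSeg γ 0 (dist x y) ∧ γ 0 = x ∧ γ (dist x y) = y

/-- CAT(0): geodesic and all geodesic triangles are thin. -/
def CAT0 (X : Type*) [MetricSpace X] : Prop :=
  GeodesicSpace X ∧ ∀ T : GeodesicTriangle X, Thin T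

/-- Length (intrinsic) distance inside `J ⊆ ℝ²`: infimum of lengths of paths in `J`. -/
def lengthDistIn (J : Set E2) (x y : E2) : ℝ≥0∞ :=
  ⨅ (γ : Path x y) (_ : ∀ t, γ t ∈ J), eVariationOn (fun t => γ t) Set.univ

/-- A Jordan domain: a homeomorphic image of the closed unit disk. -/
def IsJordanDomain (J : Set E2) : Prop :=
  Nonempty ((Metric.closedBall (0:E2) 1 : Set E2) ≃ₜ J)

end

noncomputable section

open Filter Topology

lemma evar_path {a b : E2} (γ : Path a b) :
    eVariationOn (fun t : unitInterval => γ t) Set.univ = eVariationOn γ.extend (Set.Icc 0 1) := by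
  have h := eVariationOn.comp_eq_of_monotoneOn (t := (Set.univ : Set unitInterval)) γ.extend
    (Subtype.val : unitInterval → ℝ) ((Subtype.strictMono_coe _).monotone.monotoneOn _)
  have h2 : (γ.extend ∘ (Subtype.val : unitInterval → ℝ)) = fun t : unitInterval => γ t := by
    funext t; simp [Path.extend_extends']
  rw [h2] at h
  rw [h, Set.image_univ, Subtype.range_coe]

lemma edist_le_lengthDistIn {J : Set E2} {a b : E2} : edist a b ≤ lengthDistIn J a b := by
  refine le_iInf₂ fun γ _ => ?_
  have := eVariationOn.edist_le (fun t : unitInterval => γ t) (Set.mem_univ 0) (Set.mem_univ 1)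
  simpa using this

lemma lengthDistIn_le_eVar {J : Set E2} {a b : ℝ} (hab : a < b) {g : ℝ → E2}
    (hg : ContinuousOn g (Set.Icc a b)) (hmem : ∀ t ∈ Set.Icc a b, g t ∈ J) :
    lengthDistIn J (g a) (g b) ≤ eVariationOn g (Set.Icc a b) := by
  set φ : ℝ → ℝ := fun s => (b - a) * s + a with hφ
  have hφmono : Monotone φ := fun s t hst => by dsimp only [φ]; nlinarith
  have hφim : φ '' Set.Icc 0 1 = Set.Icc a b := by
    have := Set.image_affine_Icc' (sub_pos.2 hab) a 0 1
    simpa [hφ] using this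
  have hmaps : ∀ s : unitInterval, φ s ∈ Set.Icc a b := fun s => by
    rw [← hφim]; exact Set.mem_image_of_mem _ ⟨s.2.1, s.2.2⟩
  have hcont : Continuous fun s : unitInterval => g (φ s) := by
    apply hg.comp_continuous
    · exact (continuous_const.mul continuous_subtype_val).add continuous_const
    · exact hmaps
  let γ : Path (g a) (g b) :=
    { toFun := fun s => g (φ s)
      continuous_toFun := hcont
      source' := by simp [φ]
      target' := by simp [φ]
      }
  refine le_trans (iInf₂_le γ (fun t => hmem _ (hmaps t))) ?_
  have : (fun t : unitInterval => γ t) = g ∘ (φ ∘ (Subtype.val : unitInterval → ℝ)) := rfl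
  rw [this, eVariationOn.comp_eq_of_monotoneOn (t := (Set.univ : Set unitInterval)) g _
    ((hφmono.comp (Subtype.strictMono_coe _).monotone).monotoneOn _)]
  rw [Set.image_comp, Set.image_univ, Subtype.range_coe]
  rw [hφim]

lemma exists_curve {J : Set E2} {a b : E2} {r : ℝ≥0∞} (h : lengthDistIn J a b < r) :
    ∃ g : ℝ → E2, ContinuousOn g (Set.Icc 0 1) ∧ g 0 = a ∧ g 1 = b ∧
      (∀ t ∈ Set.Icc (0:ℝ) 1, g t ∈ J) ∧ eVariationOn g (Set.Icc 0 1) < r := by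
  simp only [lengthDistIn, iInf_lt_iff] at h
  obtain ⟨γ, hmem, hvar⟩ := h
  refine ⟨γ.extend, γ.continuous_extend.continuousOn, γ.extend_zero, γ.extend_one, ?_, ?_⟩
  · intro t ht
    rw [γ.extend_apply ht]
    exact hmem _
  · rw [← evar_path]; exact hvar

lemma continuousOn_Icc_union {f : ℝ → E2} {a b c : ℝ} (hab : a ≤ b) (hbc : b ≤ c)
    (h1 : ContinuousOn f (Set.Icc a b)) (h2 : ContinuousOn f (Set.Icc b c)) :
    ContinuousOn f (Set.Icc a c) := by
  intro x hx
  have A : ContinuousWithinAt f (Set.Icc a b) x := by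
    by_cases hxb : x ≤ b
    · exact h1 x ⟨hx.1, hxb⟩
    · exact continuousWithinAt_of_notMem_closure
        (by rw [isClosed_Icc.closure_eq]; exact fun hc => hxb hc.2)
  have B : ContinuousWithinAt f (Set.Icc b c) x := by
    by_cases hxb : b ≤ x
    · exact h2 x ⟨hxb, hx.2⟩
    · exact continuousWithinAt_of_notMem_closure
        (by rw [isClosed_Icc.closure_eq]; exact fun hc => hxb hc.1)
  have := A.union B
  rwa [Set.Icc_union_Icc_eq_Icc hab hbc] at this

lemma lengthDistIn_symm_le {J : Set E2} {a b : E2} :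
    lengthDistIn J b a ≤ lengthDistIn J a b := by
  refine le_iInf₂ fun γ hγ => ?_
  refine le_trans (iInf₂_le γ.symm (fun t => hγ _)) ?_
  have h1 : (fun t : unitInterval => γ.symm t)
      = (fun t : unitInterval => γ t) ∘ unitInterval.symm := rfl
  have hanti : AntitoneOn unitInterval.symm (Set.univ : Set unitInterval) := by
    intro s _ t _ hst
    rw [← Subtype.coe_le_coe]
    simp only [unitInterval.coe_symm_eq]
    linarith [Subtype.coe_le_coe.2 hst]
  rw [h1, eVariationOn.comp_eq_of_antitoneOn _ _ hanti]
  rw [Set.image_univ, (unitInterval.symm_involutive.surjective).range_eq]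

lemma lengthDistIn_comm {J : Set E2} (a b : E2) :
    lengthDistIn J a b = lengthDistIn J b a :=
  le_antisymm lengthDistIn_symm_le lengthDistIn_symm_le

lemma lengthDistIn_triangle {J : Set E2} (a b c : E2) :
    lengthDistIn J a c ≤ lengthDistIn J a b + lengthDistIn J b c := by
  by_cases hab : lengthDistIn J a b = ⊤
  · simp [hab]
  by_cases hbc : lengthDistIn J b c = ⊤
  · simp [hbc]
  refine ENNReal.le_of_forall_pos_le_add fun ε hε _ => ?_
  have hε2 : ((ε : ℝ≥0∞) / 2) ≠ 0 := by
    simp [ENNReal.div_eq_zero_iff, hε.ne']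
  obtain ⟨g₁, hc₁, h10, h11, hm₁, hv₁⟩ := exists_curve (ENNReal.lt_add_right hab hε2)
  obtain ⟨g₂, hc₂, h20, h21, hm₂, hv₂⟩ := exists_curve (ENNReal.lt_add_right hbc hε2)
  set g : ℝ → E2 := fun t => if t ≤ 1 then g₁ t else g₂ (t - 1) with hg
  have he₁ : Set.EqOn g g₁ (Set.Icc 0 1) := fun t ht => by simp [hg, ht.2]
  have he₂ : Set.EqOn g (fun t => g₂ (t - 1)) (Set.Icc 1 2) := fun t ht => by
    by_cases h : t ≤ 1
    · have ht1 : t = 1 := le_antisymm h ht.1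
      simp [hg, ht1, h11, h20]
    · simp [hg, h]
  have hc₂' : ContinuousOn (fun t : ℝ => g₂ (t - 1)) (Set.Icc 1 2) := by
    apply hc₂.comp (continuous_id.sub continuous_const).continuousOn
    intro t ht
    exact ⟨by simp only [Pi.sub_apply, id_eq]; linarith [ht.1], by simp only [Pi.sub_apply, id_eq]; linarith [ht.2]⟩
  have hcont : ContinuousOn g (Set.Icc 0 2) :=
    continuousOn_Icc_union (by norm_num) (by norm_num)
      (hc₁.congr he₁) (hc₂'.congr he₂)
  have hmem : ∀ t ∈ Set.Icc (0:ℝ) 2, g t ∈ J := by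
    intro t ht
    by_cases h : t ≤ 1
    · rw [he₁ ⟨ht.1, h⟩]; exact hm₁ t ⟨ht.1, h⟩
    · rw [he₂ ⟨le_of_not_ge h, ht.2⟩]
      exact hm₂ (t - 1) ⟨by linarith [le_of_not_ge h], by linarith [ht.2]⟩
  have key := lengthDistIn_le_eVar (by norm_num : (0:ℝ) < 2) hcont hmem
  have hg0 : g 0 = a := by simpa [hg] using h10
  have hg2 : g 2 = c := by
    have : ¬ (2:ℝ) ≤ 1 := by norm_num
    simp only [hg, this, if_false]
    norm_num [h21]
  rw [hg0, hg2] at key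
  refine key.trans ?_
  have hsplit : eVariationOn g (Set.Icc 0 1) + eVariationOn g (Set.Icc 1 2)
      = eVariationOn g (Set.Icc 0 2) := by
    have := eVariationOn.Icc_add_Icc g (s := (Set.univ : Set ℝ)) (a := 0) (b := 1) (c := 2)
      (by norm_num) (by norm_num) trivial
    simpa using this
  rw [← hsplit]
  have e1 : eVariationOn g (Set.Icc 0 1) = eVariationOn g₁ (Set.Icc 0 1) :=
    eVariationOn.eq_of_eqOn he₁
  have e2 : eVariationOn g (Set.Icc 1 2) = eVariationOn g₂ (Set.Icc 0 1) := by
    rw [eVariationOn.eq_of_eqOn he₂]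
    have hmono : MonotoneOn (fun t : ℝ => t - 1) (Set.Icc 1 2) := by
      intro s _ t _ hst; simpa using hst
    have := eVariationOn.comp_eq_of_monotoneOn g₂ (fun t : ℝ => t - 1) hmono
    rw [show (fun t : ℝ => g₂ (t - 1)) = g₂ ∘ (fun t : ℝ => t - 1) from rfl, this]
    norm_num [Set.image_sub_const_Icc]
  rw [e1, e2]
  calc eVariationOn g₁ (Set.Icc 0 1) + eVariationOn g₂ (Set.Icc 0 1)
      ≤ (lengthDistIn J a b + ε / 2) + (lengthDistIn J b c + ε / 2) :=
        add_le_add hv₁.le hv₂.le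
    _ = lengthDistIn J a b + lengthDistIn J b c + ε := by
        rw [add_add_add_comm, ENNReal.add_halves]

lemma geom_tail_le (k m : ℕ) :
    ∑ j ∈ Finset.Ico k m, ((2:ℝ≥0∞)⁻¹) ^ j ≤ 2 * 2⁻¹ ^ k := by
  rw [Finset.sum_Ico_eq_sum_range]
  calc ∑ i ∈ Finset.range (m - k), ((2:ℝ≥0∞)⁻¹) ^ (k + i)
      = 2⁻¹ ^ k * ∑ i ∈ Finset.range (m - k), ((2:ℝ≥0∞)⁻¹) ^ i := by
        rw [Finset.mul_sum]
        exact Finset.sum_congr rfl fun i _ => by rw [pow_add]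
    _ ≤ 2⁻¹ ^ k * ∑' i : ℕ, ((2:ℝ≥0∞)⁻¹) ^ i :=
        mul_le_mul_right (ENNReal.sum_le_tsum _) _
    _ = 2 * 2⁻¹ ^ k := by
        rw [ENNReal.tsum_geometric, ENNReal.one_sub_inv_two, inv_inv, mul_comm]

lemma image_affine_sub_div {a b : ℝ} (hab : a < b) :
    (fun s => (s - a) / (b - a)) '' Set.Icc a b = Set.Icc 0 1 := by
  have hba : (0:ℝ) < b - a := sub_pos.2 hab
  have h := Set.image_affine_Icc' (inv_pos.2 hba) (-(a / (b - a))) a b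
  have hfun : (fun x : ℝ => (b - a)⁻¹ * x + -(a / (b - a))) = fun s => (s - a) / (b - a) := by
    funext s; field_simp; ring
  rw [hfun] at h
  rw [h]
  have e1 : (b - a)⁻¹ * a + -(a / (b - a)) = 0 := by field_simp; ring
  have e2 : (b - a)⁻¹ * b + -(a / (b - a)) = 1 := by field_simp; ring
  rw [e1, e2]

lemma four_mul_inv_two_pow (i : ℕ) : (4:ℝ≥0∞) * 2⁻¹ ^ (i + 2) = 2⁻¹ ^ i := by
  rw [pow_add]
  have : ((2:ℝ≥0∞)⁻¹) ^ 2 = 4⁻¹ := by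
    rw [sq, ← ENNReal.mul_inv (by norm_num) (by norm_num)]
    norm_num
  rw [this, mul_comm ((2:ℝ≥0∞)⁻¹ ^ i), ← mul_assoc,
    ENNReal.mul_inv_cancel (by norm_num) (by norm_num), one_mul]

lemma concat_limit {J : Set E2} {v : ℕ → E2} {x : E2}
    (hx : Filter.Tendsto v Filter.atTop (nhds x)) (hxJ : x ∈ J)
    (hd : ∀ k, lengthDistIn J (v k) (v (k + 1)) < 2⁻¹ ^ k) :
    ∀ k, lengthDistIn J (v k) x ≤ 2 * 2⁻¹ ^ k := by
  classical
  have hgall := fun k => exists_curve (hd k)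
  choose g hgc hg0 hg1 hgm hgv using hgall
  set t : ℕ → ℝ := fun k => 1 - (2⁻¹:ℝ) ^ k with ht
  have htlt1 : ∀ k, t k < 1 := fun k => by
    dsimp only [t]; have : (0:ℝ) < (2⁻¹:ℝ) ^ k := by positivity
    linarith
  have htmono : StrictMono t := fun a b h => by
    dsimp only [t]
    have := pow_lt_pow_right_of_lt_one₀ (by norm_num : (0:ℝ) < 2⁻¹) (by norm_num) h
    linarith
  have ht0 : ∀ k, (0:ℝ) ≤ t k := fun k => by
    have : t 0 ≤ t k := htmono.monotone (Nat.zero_le k)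
    simpa [t] using this
  have hδ : ∀ k, t (k + 1) - t k = (2⁻¹:ℝ) ^ (k + 1) := fun k => by
    dsimp only [t]; rw [pow_succ]; ring
  have hδpos : ∀ k, (0:ℝ) < t (k + 1) - t k := fun k => by
    rw [hδ]; positivity
  set h : ℕ → ℝ → E2 := fun k s => g k ((s - t k) / (t (k + 1) - t k)) with hh
  have harg : ∀ k s, s ∈ Set.Icc (t k) (t (k + 1)) →
      (s - t k) / (t (k + 1) - t k) ∈ Set.Icc (0:ℝ) 1 := by
    intro k s hs
    constructor
    · apply div_nonneg (by linarith [hs.1]) (hδpos k).le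
    · rw [div_le_one (hδpos k)]; linarith [hs.2]
  have hh0 : ∀ k, h k (t k) = v k := fun k => by
    simp [hh, hg0]
  have hh1 : ∀ k, h k (t (k + 1)) = v (k + 1) := fun k => by
    show g k ((t (k + 1) - t k) / (t (k + 1) - t k)) = v (k + 1)
    rw [div_self (hδpos k).ne', hg1]
  have hhcont : ∀ k, ContinuousOn (h k) (Set.Icc (t k) (t (k + 1))) := by
    intro k
    apply (hgc k).comp (Continuous.continuousOn (by continuity))
    exact harg k
  have hhvar : ∀ k, eVariationOn (h k) (Set.Icc (t k) (t (k + 1)))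
      = eVariationOn (g k) (Set.Icc 0 1) := by
    intro k
    have hmono : MonotoneOn (fun s => (s - t k) / (t (k + 1) - t k))
        (Set.Icc (t k) (t (k + 1))) := by
      intro p _ q _ hpq
      show (p - t k) / (t (k + 1) - t k) ≤ (q - t k) / (t (k + 1) - t k)
      rw [div_eq_mul_inv, div_eq_mul_inv]
      exact mul_le_mul_of_nonneg_right (by linarith) (inv_nonneg.2 (hδpos k).le)
    have := eVariationOn.comp_eq_of_monotoneOn (g k)
      (fun s => (s - t k) / (t (k + 1) - t k)) hmono
    rw [show h k = g k ∘ (fun s => (s - t k) / (t (k + 1) - t k)) from rfl, this,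
      image_affine_sub_div (htmono (Nat.lt_succ_self k))]
  have hex : ∀ s : ℝ, s < 1 → ∃ k, s < t (k + 1) := by
    intro s hs
    obtain ⟨i, hi⟩ := exists_pow_lt_of_lt_one (sub_pos.2 hs) (by norm_num : (2⁻¹:ℝ) < 1)
    refine ⟨i, ?_⟩
    have h2 : (2⁻¹:ℝ) ^ (i + 1) ≤ 2⁻¹ ^ i :=
      pow_le_pow_of_le_one (by norm_num) (by norm_num) (Nat.le_succ i)
    dsimp only [t]
    linarith
  set G : ℝ → E2 := fun s => if hs : s < 1 then h (Nat.find (hex s hs)) s else x with hG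
  have hG1 : G 1 = x := by simp [hG]
  have hGpiece : ∀ k s, t k ≤ s → s < t (k + 1) → G s = h k s := by
    intro k s hks hsk
    have hs1 : s < 1 := lt_trans hsk (htlt1 (k + 1))
    have hfind : Nat.find (hex s hs1) = k := by
      rw [Nat.find_eq_iff]
      refine ⟨hsk, fun j hj hcon => ?_⟩
      have : t (j + 1) ≤ t k := htmono.monotone hj
      linarith
    simp only [hG, dif_pos hs1, hfind]
  have hGloc : ∀ s : ℝ, 0 ≤ s → s < 1 → ∃ j, t j ≤ s ∧ s < t (j + 1) ∧ G s = h j s := by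
    intro s h0s hs1
    have hspec : s < t (Nat.find (hex s hs1) + 1) := Nat.find_spec (hex s hs1)
    have hj0 : t (Nat.find (hex s hs1)) ≤ s := by
      rcases Nat.eq_zero_or_pos (Nat.find (hex s hs1)) with hz | hp
      · rw [hz]; simpa [t] using h0s
      · have hmin := Nat.find_min (hex s hs1) (Nat.pred_lt hp.ne')
        rw [show (Nat.find (hex s hs1)).pred + 1 = Nat.find (hex s hs1) from
          Nat.succ_pred_eq_of_pos hp] at hmin
        exact le_of_not_gt hmin
    exact ⟨_, hj0, hspec, hGpiece _ s hj0 hspec⟩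
  have hGeq : ∀ k, Set.EqOn G (h k) (Set.Icc (t k) (t (k + 1))) := by
    intro k s hs
    rcases lt_or_eq_of_le hs.2 with hlt | heq
    · exact hGpiece k s hs.1 hlt
    · rw [heq]
      have h1 : G (t (k + 1)) = h (k + 1) (t (k + 1)) :=
        hGpiece (k + 1) (t (k + 1)) le_rfl (htmono (Nat.lt_succ_self (k + 1)))
      rw [h1, hh0, hh1]
  have hGt : ∀ k, G (t k) = v k := fun k => by
    rw [hGpiece k (t k) le_rfl (htmono (Nat.lt_succ_self k)), hh0]
  -- continuity on finite pieces
  have hGcontfin : ∀ k j, ContinuousOn G (Set.Icc (t k) (t (k + j))) := by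
    intro k j
    induction j with
    | zero => simp only [Nat.add_zero, Set.Icc_self]; exact continuousOn_singleton _ _
    | succ j ih =>
      have := continuousOn_Icc_union (htmono.monotone (Nat.le_add_right k j))
        (htmono.monotone (Nat.le_succ (k + j))) ih
        (((hhcont (k + j)).congr (hGeq (k + j))))
      exact this
  -- variation on finite pieces
  have hGvarfin : ∀ k j, eVariationOn G (Set.Icc (t k) (t (k + j))) ≤ 2 * 2⁻¹ ^ k := by
    intro k j
    have main : ∀ j, eVariationOn G (Set.Icc (t k) (t (k + j)))
        ≤ ∑ i ∈ Finset.Ico k (k + j), ((2:ℝ≥0∞)⁻¹) ^ i := by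
      intro j
      induction j with
      | zero => simp
      | succ j ih =>
        have hsplit := eVariationOn.Icc_add_Icc G (s := (Set.univ : Set ℝ))
          (a := t k) (b := t (k + j)) (c := t (k + j + 1))
          (htmono.monotone (Nat.le_add_right k j)) (htmono.monotone (Nat.le_succ (k + j)))
          trivial
        simp only [Set.univ_inter] at hsplit
        rw [show k + (j + 1) = k + j + 1 from rfl, ← hsplit]
        rw [Finset.sum_Ico_succ_top (Nat.le_add_right k j)]
        refine add_le_add ih ?_
        rw [eVariationOn.eq_of_eqOn (hGeq (k + j)), hhvar]
        exact (hgv (k + j)).le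
    exact (main j).trans (geom_tail_le k (k + j))
  have hGvar : ∀ k m, k ≤ m → eVariationOn G (Set.Icc (t k) (t m)) ≤ 2 * 2⁻¹ ^ k := by
    intro k m hkm
    obtain ⟨j, rfl⟩ := Nat.exists_eq_add_of_le hkm
    exact hGvarfin k j
  -- near bound
  have hGnear : ∀ k s, t k ≤ s → s < 1 → edist (G s) (v k) ≤ 2 * 2⁻¹ ^ k := by
    intro k s hks hs1
    obtain ⟨j, hjs, hsj, hGs⟩ := hGloc s (le_trans (ht0 k) hks) hs1
    have hkj : k ≤ j + 1 := by
      by_contra hcon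
      push_neg at hcon
      have : t (j + 1) ≤ t k := htmono.monotone (by omega)
      linarith
    have hmem1 : s ∈ Set.Icc (t k) (t (j + 1)) := ⟨hks, hsj.le⟩
    have hmem2 : t k ∈ Set.Icc (t k) (t (j + 1)) := ⟨le_rfl, htmono.monotone hkj⟩
    have := eVariationOn.edist_le G hmem1 hmem2
    rw [hGt k] at this
    exact this.trans (hGvar k (j + 1) hkj)
  -- distance from x to v k
  have hxv : ∀ k, edist x (v k) ≤ 2 * 2⁻¹ ^ k := by
    intro k
    have htd : Filter.Tendsto (fun j => edist (v j) (v k)) Filter.atTop (nhds (edist x (v k))) :=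
      (Filter.Tendsto.edist hx tendsto_const_nhds)
    refine le_of_tendsto htd ?_
    filter_upwards [Filter.eventually_ge_atTop k] with j hj
    have hmem1 : t j ∈ Set.Icc (t k) (t j) := ⟨htmono.monotone hj, le_rfl⟩
    have hmem2 : t k ∈ Set.Icc (t k) (t j) := ⟨le_rfl, htmono.monotone hj⟩
    have := eVariationOn.edist_le G hmem1 hmem2
    rw [hGt k, hGt j] at this
    exact this.trans (hGvar k j hj)
  -- continuity on [t k, 1]
  have hGcont : ∀ k, ContinuousOn G (Set.Icc (t k) 1) := by
    intro k s hs
    rcases lt_or_eq_of_le hs.2 with hs1 | hs1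
    · obtain ⟨m, hm⟩ := hex s hs1
      set M := max (k + 1) (m + 1) with hM
      have hsM : s < t M := lt_of_lt_of_le hm (htmono.monotone (le_max_right _ _))
      have hkM : k ≤ M := le_trans (Nat.le_succ k) (le_max_left _ _)
      obtain ⟨j, hMj⟩ := Nat.exists_eq_add_of_le hkM
      rw [hMj] at hsM
      have base : ContinuousWithinAt G (Set.Icc (t k) (t (k + j))) s :=
        hGcontfin k j s ⟨hs.1, hsM.le⟩
      have hle : nhdsWithin s (Set.Icc (t k) 1) ≤ nhdsWithin s (Set.Icc (t k) (t (k + j))) := by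
        rw [nhdsWithin_restrict' (Set.Icc (t k) 1) (Iio_mem_nhds hsM)]
        exact nhdsWithin_mono _ (fun y hy => ⟨hy.1.1, hy.2.le⟩)
      exact base.mono_left hle
    · subst hs1
      show Filter.Tendsto G (nhdsWithin 1 (Set.Icc (t k) 1)) (nhds (G 1))
      rw [hG1]
      rw [EMetric.tendsto_nhds]
      intro ε hε
      obtain ⟨i, hi⟩ := ENNReal.exists_inv_two_pow_lt hε.ne'
      set m := i + 2 with hm
      have hIoi : Set.Ioi (t m) ∈ nhdsWithin (1:ℝ) (Set.Icc (t k) 1) :=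
        mem_nhdsWithin_of_mem_nhds (Ioi_mem_nhds (htlt1 m))
      filter_upwards [hIoi, self_mem_nhdsWithin] with y hy1 hy2
      rcases lt_or_eq_of_le hy2.2 with hy3 | hy3
      · calc edist (G y) x ≤ edist (G y) (v m) + edist (v m) x := edist_triangle _ _ _
          _ ≤ 2 * 2⁻¹ ^ m + 2 * 2⁻¹ ^ m := by
              refine add_le_add (hGnear m y (le_of_lt hy1) hy3) ?_
              rw [edist_comm]; exact hxv m
          _ = 4 * 2⁻¹ ^ (i + 2) := by rw [← two_mul, ← mul_assoc]; norm_num [hm]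
          _ = 2⁻¹ ^ i := four_mul_inv_two_pow i
          _ < ε := hi
      · rw [hy3, hG1, edist_self]
        exact hε
  -- membership
  have hGmem : ∀ k, ∀ s ∈ Set.Icc (t k) 1, G s ∈ J := by
    intro k s hs
    rcases lt_or_eq_of_le hs.2 with hs1 | hs1
    · obtain ⟨j, hjs, hsj, hGs⟩ := hGloc s (le_trans (ht0 k) hs.1) hs1
      rw [hGs]
      exact hgm j _ (harg j s ⟨hjs, hsj.le⟩)
    · rw [hs1, hG1]; exact hxJ
  -- variation bound on [t k, 1]
  have hGvarinf : ∀ k, eVariationOn G (Set.Icc (t k) 1) ≤ 2 * 2⁻¹ ^ k := by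
    intro k
    by_contra hcon
    push_neg at hcon
    set F : ℕ → ℝ → E2 := fun m s => G (min s (t m)) with hF
    have hpt : ∀ s ∈ Set.Icc (t k) 1, Filter.Tendsto (fun m => F m s) Filter.atTop (nhds (G s)) := by
      intro s hs
      rcases lt_or_eq_of_le hs.2 with hs1 | hs1
      · obtain ⟨m₀, hm₀⟩ := hex s hs1
        have hev : ∀ᶠ m in Filter.atTop, F m s = G s := by
          filter_upwards [Filter.eventually_ge_atTop (m₀ + 1)] with m hm
          have : s ≤ t m := le_trans hm₀.le (htmono.monotone hm)
          simp [hF, min_eq_left this]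
        refine Filter.Tendsto.congr' ?_ tendsto_const_nhds
        filter_upwards [hev] with m hm
        exact hm.symm
      · subst hs1
        have hfm : ∀ m, F m 1 = v m := fun m => by
          have hmin : min (1:ℝ) (t m) = t m := min_eq_right (htlt1 m).le
          show G (min (1:ℝ) (t m)) = v m
          rw [hmin, hGt]
        rw [show (fun m => F m 1) = v from funext hfm, hG1]
        exact hx
    have hev := eVariationOn.lowerSemicontinuous_aux hpt hcon
    obtain ⟨m, hmlt, hkm⟩ := (hev.and (Filter.eventually_ge_atTop k)).exists
    have hbound : eVariationOn (F m) (Set.Icc (t k) 1) ≤ 2 * 2⁻¹ ^ k := by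
      have hcomp : F m = G ∘ (fun s => min s (t m)) := rfl
      rw [hcomp]
      refine (eVariationOn.comp_le_of_monotoneOn G _ ?_ ?_).trans (hGvar k m hkm)
      · intro p _ q _ hpq
        exact min_le_min hpq le_rfl
      · intro p hp
        exact ⟨le_min hp.1 (htmono.monotone hkm), min_le_right _ _⟩
    exact absurd (lt_of_lt_of_le hmlt hbound) (lt_irrefl _)
  -- conclusion
  intro k
  have hle := lengthDistIn_le_eVar (htlt1 k) (hGcont k) (hGmem k)
  rw [hGt k, hG1] at hle
  exact hle.trans (hGvarinf k)

/-- The set of points of a Jordan domain `J` joined to a fixed interior point `z` by a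
rectifiable curve in `J`, with the induced length metric, is complete: every Cauchy
sequence (for the length metric) converges in the length metric to a point of the set. -/
theorem finite_points_complete (J : Set E2) (hJ : IsJordanDomain J)
    (z : E2) (hz : z ∈ interior J) :
    ∀ u : ℕ → E2,
      (∀ n, u n ∈ J ∧ lengthDistIn J z (u n) < ⊤) →
      (∀ ε : ℝ≥0∞, 0 < ε → ∃ N, ∀ m ≥ N, ∀ n ≥ N, lengthDistIn J (u m) (u n) < ε) →
      ∃ x : E2, (x ∈ J ∧ lengthDistIn J z x < ⊤) ∧
        Tendsto (fun n => lengthDistIn J (u n) x) atTop (𝓝 0) := by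
  intro u hu hC
  -- J is closed
  have hJc : IsClosed J := by
    obtain ⟨e⟩ := hJ
    have h1 : CompactSpace (Metric.closedBall (0:E2) 1 : Set E2) :=
      isCompact_iff_compactSpace.mp (isCompact_closedBall _ _)
    have h2 : CompactSpace J := e.compactSpace
    exact (isCompact_iff_compactSpace.mpr h2).isClosed
  -- u is Cauchy in the Euclidean metric
  have hcauchy : CauchySeq u := by
    rw [EMetric.cauchySeq_iff]
    intro ε hε
    obtain ⟨N, hN⟩ := hC ε hε
    exact ⟨N, fun m hm n hn => lt_of_le_of_lt edist_le_lengthDistIn (hN m hm n hn)⟩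
  obtain ⟨x, hx⟩ := cauchySeq_tendsto_of_complete hcauchy
  have hxJ : x ∈ J := hJc.mem_of_tendsto hx (Filter.Eventually.of_forall fun n => (hu n).1)
  -- extract a rapidly converging subsequence
  have hpos : ∀ k : ℕ, (0:ℝ≥0∞) < 2⁻¹ ^ k := fun k =>
    ENNReal.pow_pos (ENNReal.inv_pos.mpr ENNReal.ofNat_ne_top) k
  have hNex : ∀ k : ℕ, ∃ N, ∀ m ≥ N, ∀ n ≥ N, lengthDistIn J (u m) (u n) < 2⁻¹ ^ k :=
    fun k => hC _ (hpos k)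
  choose N hNspec using hNex
  let n : ℕ → ℕ := fun k => Nat.rec (N 0) (fun k ih => max (ih + 1) (N (k + 1))) k
  have hn0 : n 0 = N 0 := rfl
  have hnsucc : ∀ k, n (k + 1) = max (n k + 1) (N (k + 1)) := fun k => rfl
  have hnN : ∀ k, N k ≤ n k := fun k => by
    cases k with
    | zero => exact le_rfl
    | succ k => rw [hnsucc]; exact le_max_right _ _
  have hnmono : StrictMono n := strictMono_nat_of_lt_succ fun k => by
    rw [hnsucc]; exact lt_of_lt_of_le (Nat.lt_succ_self _) (le_max_left _ _)
  have hgen : ∀ k m, n k ≤ m → lengthDistIn J (u (n k)) (u m) < 2⁻¹ ^ k :=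
    fun k m hm => hNspec k (n k) (hnN k) m (le_trans (hnN k) hm)
  have hdd : ∀ k, lengthDistIn J (u (n k)) (u (n (k + 1))) < 2⁻¹ ^ k :=
    fun k => hgen k (n (k + 1)) (hnmono (Nat.lt_succ_self k)).le
  have hv : Tendsto (fun k => u (n k)) atTop (𝓝 x) := hx.comp (hnmono.tendsto_atTop)
  have key : ∀ k, lengthDistIn J (u (n k)) x ≤ 2 * 2⁻¹ ^ k := concat_limit hv hxJ hdd
  refine ⟨x, ⟨hxJ, ?_⟩, ?_⟩
  · refine lt_of_le_of_lt (lengthDistIn_triangle z (u (n 0)) x) ?_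
    apply ENNReal.add_lt_top.mpr
    constructor
    · exact (hu (n 0)).2
    · exact lt_of_le_of_lt (key 0) (by norm_num)
  · rw [ENNReal.tendsto_nhds_zero]
    intro ε hε
    obtain ⟨i, hi⟩ := ENNReal.exists_inv_two_pow_lt hε.ne'
    filter_upwards [Filter.eventually_ge_atTop (n (i + 2))] with m hm
    have h1 : lengthDistIn J (u m) (u (n (i + 2))) < 2⁻¹ ^ (i + 2) := by
      rw [lengthDistIn_comm]
      exact hgen (i + 2) m hm
    calc lengthDistIn J (u m) x
        ≤ lengthDistIn J (u m) (u (n (i + 2))) + lengthDistIn J (u (n (i + 2))) x :=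
          lengthDistIn_triangle _ _ _
      _ ≤ 2⁻¹ ^ (i + 2) + 2 * 2⁻¹ ^ (i + 2) := add_le_add h1.le (key (i + 2))
      _ ≤ 4 * 2⁻¹ ^ (i + 2) := by
          rw [show (4:ℝ≥0∞) = 1 + 3 from by norm_num, add_mul, one_mul]
          exact add_le_add le_rfl (mul_le_mul_left (by norm_num) _)
      _ = 2⁻¹ ^ i := four_mul_inv_two_pow i
      _ ≤ ε := hi.le


end
end

section
/- In a geodesic metric space where every geodesic triangle with vertex set of three distinct points reduces (after removing common initial arcs at each vertex) to a triangle with thin comparison property, all geodesic triangles are thin: i.e., if a geodesic triangle consists of a simple-closed-curve core triangle together with three geodesic 'tails' at the vertices, and the core triangle is thin, then the full triangle is thin. -/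
open Set Metric
open scoped ENNReal

/-!
Everything rests on one Euclidean fact: if segments `[u, w]` and `[U, W]` have equal length and
`Z` is at least `a` farther from `U` and from `W` than `z` is from `u` and from `w`, then the same
holds for corresponding points of the two segments (Stewart's theorem plus convexity of the
distance). Applied to the comparison triangles of `T` and of its core `T'`, it shows that a
vertex of the former is farther from the opposite core side by at least its tail length, and
that corresponding points of two core sides are at least as far apart. For two points on sides
of `T`, either the common tail at the shared vertex joins them geodesically, or each point is
moved along its tail into the core and these two inequalities absorb the lengths travelled.
-/

open AffineMap

noncomputable section

section Segment
variable {F : Type*} [NormedAddCommGroup F] [NormedSpace ℝ F]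

def segPoint (x y : F) (s : ℝ) : F :=
  lineMap x y (s / dist x y)

theorem segPoint_zero (x y : F) : segPoint x y 0 = x := by
  simp [segPoint]

theorem segPoint_dist (x y : F) : segPoint x y (dist x y) = y := by
  rcases eq_or_ne x y with rfl | h
  · simp [segPoint]
  · simp [segPoint, div_self (dist_ne_zero.2 h)]

theorem isGeodesicSeg_segPoint (x y : F) : IsGeodesicSeg (segPoint x y) 0 (dist x y) := by
  intro s hs t ht
  rcases eq_or_ne x y with rfl | h
  · obtain rfl : s = 0 := by simpa using hs
    obtain rfl : t = 0 := by simpa using ht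
    simp
  · have hd := dist_pos.2 h
    rw [segPoint, segPoint, dist_lineMap_lineMap, Real.dist_eq, ← sub_div, abs_div,
      abs_of_pos hd, div_mul_cancel₀ _ hd.ne']

theorem dist_segPoint_left {x y : F} {s : ℝ} (hs : s ∈ Icc 0 (dist x y)) :
    dist x (segPoint x y s) = s := by
  have := isGeodesicSeg_segPoint x y 0 ⟨le_rfl, dist_nonneg⟩ s hs
  rwa [segPoint_zero, zero_sub, abs_neg, abs_of_nonneg hs.1] at this

theorem dist_segPoint_right {x y : F} {s : ℝ} (hs : s ∈ Icc 0 (dist x y)) :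
    dist (segPoint x y s) y = dist x y - s := by
  have := isGeodesicSeg_segPoint x y s hs (dist x y) ⟨dist_nonneg, le_rfl⟩
  rwa [segPoint_dist, abs_sub_comm, abs_of_nonneg (sub_nonneg.2 hs.2)] at this

theorem segPoint_add {x y : F} {a ℓ s : ℝ} (ha : 0 ≤ a) (hℓ : a + ℓ ≤ dist x y)
    (hs : s ∈ Icc 0 ℓ) :
    segPoint x y (a + s) = segPoint (segPoint x y a) (segPoint x y (a + ℓ)) s := by
  have hℓ₀ : 0 ≤ ℓ := hs.1.trans hs.2
  have hdist : dist (segPoint x y a) (segPoint x y (a + ℓ)) = ℓ := by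
    rw [isGeodesicSeg_segPoint x y a ⟨ha, by linarith⟩ (a + ℓ) ⟨by linarith, hℓ⟩]
    simp [abs_of_nonneg hℓ₀]
  rcases hℓ₀.eq_or_lt with rfl | hℓ_pos
  · obtain rfl : s = 0 := le_antisymm hs.2 hs.1
    simp [segPoint_zero]
  · have hd : dist x y ≠ 0 := by linarith
    conv_rhs => rw [segPoint, hdist]
    rw [segPoint, segPoint, segPoint, ← apply_lineMap (lineMap x y), lineMap_apply_ring']
    congr 1
    field_simp
    ring

end Segment

section Comparison
variable {F : Type*} [NormedAddCommGroup F] [InnerProductSpace ℝ F]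

/-- Stewart's theorem. -/
theorem dist_sq_lineMap (z u w : F) (τ : ℝ) :
    dist z (lineMap u w τ) ^ 2
      = (1 - τ) * dist z u ^ 2 + τ * dist z w ^ 2 - τ * (1 - τ) * dist u w ^ 2 := by
  have h : z - lineMap u w τ = (1 - τ) • (z - u) + τ • (z - w) := by
    rw [lineMap_apply_module]; module
  have hinner : 2 * inner ℝ (z - u) (z - w) = dist z u ^ 2 + dist z w ^ 2 - dist u w ^ 2 := by
    have := norm_sub_sq_real (z - u) (z - w)
    rw [sub_sub_sub_cancel_left] at this
    rw [dist_eq_norm, dist_eq_norm, dist_eq_norm', this]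
    ring
  rw [dist_eq_norm, h, norm_add_sq_real, norm_smul, norm_smul, real_inner_smul_left,
    real_inner_smul_right, Real.norm_eq_abs, Real.norm_eq_abs, mul_pow, mul_pow, sq_abs,
    sq_abs, ← dist_eq_norm, ← dist_eq_norm]
  linear_combination τ * (1 - τ) * hinner

theorem add_dist_lineMap_le {z u w Z U W : F} {a τ : ℝ} (ha : 0 ≤ a) (hτ₀ : 0 ≤ τ)
    (hτ₁ : τ ≤ 1) (huw : dist u w = dist U W) (hu : a + dist z u ≤ dist Z U)
    (hw : a + dist z w ≤ dist Z W) :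
    a + dist z (lineMap u w τ) ≤ dist Z (lineMap U W τ) := by
  have hconv : dist z (lineMap u w τ) ≤ (1 - τ) * dist z u + τ * dist z w := by
    have := (convexOn_univ_dist z).2 (mem_univ u) (mem_univ w) (sub_nonneg.2 hτ₁) hτ₀
      (by ring)
    simpa [lineMap_apply_module, dist_comm z] using this
  have hu' : (a + dist z u) ^ 2 ≤ dist Z U ^ 2 := by gcongr
  have hw' : (a + dist z w) ^ 2 ≤ dist Z W ^ 2 := by gcongr
  -- Stewart's theorem on both sides reduces this to `hconv`.
  have hsq : (a + dist z (lineMap u w τ)) ^ 2 ≤ dist Z (lineMap U W τ) ^ 2 := by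
    rw [dist_sq_lineMap Z, ← huw]
    nlinarith [dist_sq_lineMap z u w τ, mul_le_mul_of_nonneg_left hu' (sub_nonneg.2 hτ₁),
      mul_le_mul_of_nonneg_left hw' hτ₀, mul_le_mul_of_nonneg_left hconv ha]
  exact (pow_le_pow_iff_left₀ (by positivity) dist_nonneg two_ne_zero).1 hsq

theorem add_dist_segPoint_le {z u w Z U W : F} {a s : ℝ} (ha : 0 ≤ a)
    (huw : dist u w = dist U W) (hu : a + dist z u ≤ dist Z U)
    (hw : a + dist z w ≤ dist Z W) (hs : s ∈ Icc 0 (dist u w)) :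
    a + dist z (segPoint u w s) ≤ dist Z (segPoint U W s) := by
  rw [segPoint, segPoint, ← huw]
  exact add_dist_lineMap_le ha (div_nonneg hs.1 dist_nonneg)
    (div_le_one_of_le₀ hs.2 dist_nonneg) huw hu hw

end Comparison

/- `PQR` plays the comparison triangle of a triangle with tails of lengths `a, b, c` at its
vertices, and `pqr` the comparison triangle of its core. -/
section TailedComparison
variable {F : Type*} [NormedAddCommGroup F] [InnerProductSpace ℝ F] {P Q R p q r : F}
  {a b c : ℝ}

theorem add_dist_segPoint_le_dist_segPoint_add (ha : 0 ≤ a) (hb : 0 ≤ b)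
    (hc : 0 ≤ c) (hPQ : dist P Q = a + dist p q + b) (hQR : dist Q R = b + dist q r + c)
    (hRP : dist R P = c + dist r p + a) {s : ℝ} (hs : s ∈ Icc 0 (dist p q)) :
    c + dist r (segPoint p q s) ≤ dist R (segPoint P Q (a + s)) := by
  have hpq : 0 ≤ dist p q := dist_nonneg
  rw [segPoint_add ha (by linarith) hs]
  have hPA : dist P (segPoint P Q a) = a := dist_segPoint_left ⟨ha, by linarith⟩
  have hBQ : dist (segPoint P Q (a + dist p q)) Q = b := by
    rw [dist_segPoint_right ⟨by linarith, by linarith⟩, hPQ]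
    ring
  refine add_dist_segPoint_le hc ?_ ?_ ?_ hs
  · rw [isGeodesicSeg_segPoint P Q a ⟨ha, by linarith⟩ _ ⟨by linarith, by linarith⟩]
    simp
  · linarith [dist_triangle R (segPoint P Q a) P, dist_comm (segPoint P Q a) P, dist_comm r p]
  · linarith [dist_triangle R (segPoint P Q (a + dist p q)) Q, dist_comm R Q, dist_comm r q]

theorem dist_segPoint_le_dist_segPoint_add (ha : 0 ≤ a) (hb : 0 ≤ b)
    (hc : 0 ≤ c) (hPQ : dist P Q = a + dist p q + b) (hQR : dist Q R = b + dist q r + c)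
    (hRP : dist R P = c + dist r p + a) {s t : ℝ} (hs : s ∈ Icc 0 (dist p q))
    (ht : t ∈ Icc 0 (dist q r)) :
    dist (segPoint p q s) (segPoint q r t) ≤
      dist (segPoint P Q (a + s)) (segPoint Q R (b + t)) := by
  have hqr : 0 ≤ dist q r := dist_nonneg
  have hxr := add_dist_segPoint_le_dist_segPoint_add ha hb hc hPQ hQR hRP hs
  set X := segPoint P Q (a + s)
  rw [segPoint_add hb (by linarith) ht, ← zero_add (dist _ _)]
  have hBQ : dist Q (segPoint Q R b) = b := dist_segPoint_left ⟨hb, by linarith⟩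
  have hCR : dist (segPoint Q R (b + dist q r)) R = c := by
    rw [dist_segPoint_right ⟨by linarith, by linarith⟩, hQR]
    ring
  have hXQ : dist X Q = dist p q - s + b := by
    rw [dist_segPoint_right ⟨by linarith [hs.1], by linarith [hs.2]⟩, hPQ]
    ring
  have hxq : dist (segPoint p q s) q = dist p q - s := dist_segPoint_right hs
  refine add_dist_segPoint_le le_rfl ?_ ?_ ?_ ht
  · rw [isGeodesicSeg_segPoint Q R b ⟨hb, by linarith⟩ _ ⟨by linarith, by linarith⟩]
    simp
  · linarith [dist_triangle X (segPoint Q R b) Q, dist_comm (segPoint Q R b) Q]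
  · linarith [dist_triangle R (segPoint Q R (b + dist q r)) X,
      dist_comm X (segPoint Q R (b + dist q r)), dist_comm (segPoint Q R (b + dist q r)) R,
      dist_comm r (segPoint p q s)]

end TailedComparison

theorem dist_E2_eq (x y x' y' : ℝ) :
    dist !₂[x, y] !₂[x', y'] = √((x - x') ^ 2 + (y - y') ^ 2) := by
  simp [EuclideanSpace.dist_eq, Fin.sum_univ_two, Real.dist_eq, sq_abs]

theorem exists_E2_triangle {ℓ₁ ℓ₂ ℓ₃ : ℝ} (h₁ : ℓ₁ ≤ ℓ₂ + ℓ₃) (h₂ : ℓ₂ ≤ ℓ₃ + ℓ₁)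
    (h₃ : ℓ₃ ≤ ℓ₁ + ℓ₂) : ∃ p q r : E2, dist p q = ℓ₁ ∧ dist q r = ℓ₂ ∧ dist r p = ℓ₃ := by
  have hℓ₁ : 0 ≤ ℓ₁ := by linarith
  have hℓ₂ : 0 ≤ ℓ₂ := by linarith
  have hℓ₃ : 0 ≤ ℓ₃ := by linarith
  -- `r = (x, y)` with `x` from the law of cosines; for `ℓ₁ = 0` the junk value `x = 0` works.
  set x := (ℓ₁ ^ 2 + ℓ₃ ^ 2 - ℓ₂ ^ 2) / (2 * ℓ₁)
  have hx : x ^ 2 ≤ ℓ₃ ^ 2 ∧ (ℓ₁ - x) ^ 2 + (ℓ₃ ^ 2 - x ^ 2) = ℓ₂ ^ 2 := by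
    rcases hℓ₁.eq_or_lt with h₀ | hpos
    · have : ℓ₂ = ℓ₃ := by linarith
      simp [x, ← h₀, this, sq_nonneg]
    · have hx : 2 * ℓ₁ * x = ℓ₁ ^ 2 + ℓ₃ ^ 2 - ℓ₂ ^ 2 := by simp only [x]; field_simp
      have hprod : 4 * ℓ₁ ^ 2 * (ℓ₃ ^ 2 - x ^ 2)
          = (ℓ₁ + ℓ₃ - ℓ₂) * (ℓ₁ + ℓ₃ + ℓ₂) * ((ℓ₂ - ℓ₁ + ℓ₃) * (ℓ₂ + ℓ₁ - ℓ₃)) := by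
        linear_combination (-(2 * ℓ₁ * x) - (ℓ₁ ^ 2 + ℓ₃ ^ 2 - ℓ₂ ^ 2)) * hx
      have : 0 ≤ 4 * ℓ₁ ^ 2 * (ℓ₃ ^ 2 - x ^ 2) := by
        rw [hprod]
        apply mul_nonneg <;> apply mul_nonneg <;> linarith
      exact ⟨by nlinarith [pow_pos hpos 2], by linear_combination -hx⟩
  clear_value x
  have hy := Real.sq_sqrt (sub_nonneg.2 hx.1)
  refine ⟨!₂[0, 0], !₂[ℓ₁, 0], !₂[x, √(ℓ₃ ^ 2 - x ^ 2)], ?_, ?_, ?_⟩ <;>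
    rw [dist_E2_eq, Real.sqrt_eq_iff_eq_sq (by positivity) (by assumption)]
  · ring
  · linear_combination hx.2 + hy
  · linear_combination hy

namespace GeodesicTriangle
variable {X : Type*} [MetricSpace X]

def rotate (T : GeodesicTriangle X) : GeodesicTriangle X where
  p := T.q
  q := T.r
  r := T.p
  side₁ := T.side₂
  side₂ := T.side₃
  side₃ := T.side₁
  geo₁ := T.geo₂
  geo₂ := T.geo₃
  geo₃ := T.geo₁
  s₁0 := T.s₂0
  s₁1 := T.s₂1
  s₂0 := T.s₃0
  s₂1 := T.s₃1
  s₃0 := T.s₁0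
  s₃1 := T.s₁1

theorem exists_comparison (T : GeodesicTriangle X) :
    ∃ p' q' r' : E2, dist p' q' = dist T.p T.q ∧ dist q' r' = dist T.q T.r ∧
      dist r' p' = dist T.r T.p :=
  exists_E2_triangle
    (by linarith [dist_triangle T.p T.r T.q, dist_comm T.p T.r, dist_comm T.r T.q])
    (by linarith [dist_triangle T.q T.p T.r, dist_comm T.q T.p, dist_comm T.p T.r])
    (by linarith [dist_triangle T.r T.q T.p, dist_comm T.r T.q, dist_comm T.q T.p])

/-- `T` is the core triangle `T'` with geodesic tails of lengths `a`, `b`, `c` attached at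
`p`, `q`, `r`. -/
structure HasCore (T T' : GeodesicTriangle X) (a b c : ℝ) : Prop where
  nonneg_a : 0 ≤ a
  nonneg_b : 0 ≤ b
  nonneg_c : 0 ≤ c
  dist_pq : dist T.p T.q = a + dist T'.p T'.q + b
  dist_qr : dist T.q T.r = b + dist T'.q T'.r + c
  dist_rp : dist T.r T.p = c + dist T'.r T'.p + a
  side₁_core : ∀ t ∈ Icc (0:ℝ) (dist T'.p T'.q), T.side₁ (a + t) = T'.side₁ t
  side₂_core : ∀ t ∈ Icc (0:ℝ) (dist T'.q T'.r), T.side₂ (b + t) = T'.side₂ t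
  side₃_core : ∀ t ∈ Icc (0:ℝ) (dist T'.r T'.p), T.side₃ (c + t) = T'.side₃ t
  tail_p : ∀ t ∈ Icc (0:ℝ) a, T.side₁ t = T.side₃ (dist T.r T.p - t)
  tail_q : ∀ t ∈ Icc (0:ℝ) b, T.side₂ t = T.side₁ (dist T.p T.q - t)
  tail_r : ∀ t ∈ Icc (0:ℝ) c, T.side₃ t = T.side₂ (dist T.q T.r - t)

end GeodesicTriangle

variable {X : Type*} [MetricSpace X] {T T' : GeodesicTriangle X} {a b c : ℝ}

theorem Thin.rotate (h : Thin T) : Thin T.rotate := by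
  intro p' q' r' h₁ h₂ h₃
  obtain ⟨h₁₂, h₂₃, h₃₁⟩ := h r' p' q' h₃ h₁ h₂
  exact ⟨h₂₃, h₃₁, h₁₂⟩

theorem Thin.dist_side₁_side₂_le (h : Thin T) {p' q' r' : E2} (h₁ : dist p' q' = dist T.p T.q)
    (h₂ : dist q' r' = dist T.q T.r) (h₃ : dist r' p' = dist T.r T.p) {s t : ℝ}
    (hs : s ∈ Icc 0 (dist T.p T.q)) (ht : t ∈ Icc 0 (dist T.q T.r)) :
    dist (T.side₁ s) (T.side₂ t) ≤ dist (segPoint p' q' s) (segPoint q' r' t) := by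
  simpa only [segPoint, h₁, h₂] using (h p' q' r' h₁ h₂ h₃).1 s hs t ht

namespace GeodesicTriangle.HasCore

theorem rotate (hT : T.HasCore T' a b c) : T.rotate.HasCore T'.rotate b c a :=
  ⟨hT.nonneg_b, hT.nonneg_c, hT.nonneg_a, hT.dist_qr, hT.dist_rp, hT.dist_pq, hT.side₂_core,
    hT.side₃_core, hT.side₁_core, hT.tail_q, hT.tail_r, hT.tail_p⟩

theorem side₁_start (hT : T.HasCore T' a b c) : T.side₁ a = T'.p := by
  simpa [T'.s₁0] using hT.side₁_core 0 ⟨le_rfl, dist_nonneg⟩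

theorem side₁_end (hT : T.HasCore T' a b c) : T.side₁ (a + dist T'.p T'.q) = T'.q := by
  rw [hT.side₁_core _ ⟨dist_nonneg, le_rfl⟩, T'.s₁1]

variable {cp cq cr p' q' r' : E2}

theorem add_dist_side₁_le (hT : T.HasCore T' a b c) (hthin : Thin T')
    (e₁ : dist cp cq = dist T'.p T'.q) (e₂ : dist cq cr = dist T'.q T'.r)
    (e₃ : dist cr cp = dist T'.r T'.p) (hPQ : dist p' q' = a + dist cp cq + b)
    (hQR : dist q' r' = b + dist cq cr + c) (hRP : dist r' p' = c + dist cr cp + a) {s : ℝ}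
    (hs : s ∈ Icc 0 (a + dist T'.p T'.q)) :
    c + dist T'.r (T.side₁ s) ≤ dist r' (segPoint p' q' s) := by
  have ha := hT.nonneg_a
  have hb := hT.nonneg_b
  have hs₁ : s ∈ Icc 0 (dist T.p T.q) := ⟨hs.1, by linarith [hs.2, hT.dist_pq]⟩
  have hpq : a ≤ dist T.p T.q := by linarith [hT.dist_pq, dist_nonneg (x := T'.p) (y := T'.q)]
  have hs' : s ∈ Icc 0 (dist p' q') := ⟨hs.1, by linarith [hs.2, e₁]⟩
  rcases le_or_gt a s with has | hsa
  · have hcore : s - a ∈ Icc 0 (dist T'.p T'.q) := ⟨by linarith, by linarith [hs.2]⟩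
    have hside : T.side₁ s = T'.side₁ (s - a) := by
      simpa using hT.side₁_core (s - a) hcore
    have hthin' := hthin.dist_side₁_side₂_le e₁ e₂ e₃ hcore ⟨dist_nonneg, le_rfl⟩
    rw [T'.s₂1, ← e₂, segPoint_dist] at hthin'
    have hcmp := add_dist_segPoint_le_dist_segPoint_add ha hb hT.nonneg_c hPQ hQR hRP
      (e₁ ▸ hcore)
    rw [add_sub_cancel] at hcmp
    rw [hside, dist_comm T'.r]
    linarith [dist_comm cr (segPoint cp cq (s - a))]
  · have hTp : dist T'.p (T.side₁ s) = a - s := by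
      rw [← hT.side₁_start, T.geo₁ a ⟨ha, hpq⟩ s hs₁, abs_of_pos (by linarith)]
    linarith [dist_triangle T'.r T'.p (T.side₁ s), dist_comm T'.r T'.p,
      dist_triangle r' (segPoint p' q' s) p', dist_comm (segPoint p' q' s) p',
      dist_segPoint_left hs', e₃]

theorem dist_side₁_side₂_of_tail_q (hT : T.HasCore T' a b c) {s t : ℝ}
    (hs : s ∈ Icc 0 (dist T.p T.q)) (ht : t ∈ Icc 0 (dist T.q T.r))
    (htail : t ≤ b ∨ a + dist T'.p T'.q ≤ s) :
    dist (T.side₁ s) (T.side₂ t) = |dist T.p T.q - s - t| := by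
  have hpq := hT.dist_pq
  have hqr := hT.dist_qr
  have ha := hT.nonneg_a
  have hc := hT.nonneg_c
  have hL₁ : 0 ≤ dist T'.p T'.q := dist_nonneg
  have hL₂ : 0 ≤ dist T'.q T'.r := dist_nonneg
  rcases htail with htb | hqs
  · rw [hT.tail_q t ⟨ht.1, htb⟩, T.geo₁ s hs _ ⟨by linarith, by linarith [ht.1]⟩, abs_sub_comm,
      sub_right_comm]
  · have hside := hT.tail_q (dist T.p T.q - s) ⟨by linarith [hs.2], by linarith⟩
    rw [sub_sub_cancel] at hside
    rw [← hside, T.geo₂ _ ⟨by linarith [hs.2], by linarith⟩ t ht]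

theorem dist_side₁_side₂_le_off_tail_q (hT : T.HasCore T' a b c) (hthin : Thin T')
    (e₁ : dist cp cq = dist T'.p T'.q) (e₂ : dist cq cr = dist T'.q T'.r)
    (e₃ : dist cr cp = dist T'.r T'.p) (hPQ : dist p' q' = a + dist cp cq + b)
    (hQR : dist q' r' = b + dist cq cr + c) (hRP : dist r' p' = c + dist cr cp + a) {s t : ℝ}
    (hs : s ∈ Ico 0 (a + dist T'.p T'.q)) (ht : t ∈ Ioc b (dist T.q T.r)) :
    dist (T.side₁ s) (T.side₂ t) ≤ dist (segPoint p' q' s) (segPoint q' r' t) := by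
  have ha := hT.nonneg_a
  have hb := hT.nonneg_b
  have hc := hT.nonneg_c
  have hpq := hT.dist_pq
  have hqr := hT.dist_qr
  have hL₁ : 0 ≤ dist T'.p T'.q := dist_nonneg
  have hL₂ : 0 ≤ dist T'.q T'.r := dist_nonneg
  have hs₁ : s ∈ Icc 0 (dist T.p T.q) := ⟨hs.1, by linarith [hs.2]⟩
  have ht₁ : t ∈ Icc 0 (dist T.q T.r) := ⟨by linarith [ht.1], ht.2⟩
  set x := segPoint p' q' s
  set y := segPoint q' r' t
  have hpx : dist p' x = s := dist_segPoint_left ⟨hs.1, by linarith [hs.2]⟩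
  have hyr : dist y r' = dist T.q T.r - t := by
    rw [dist_segPoint_right ⟨by linarith [ht.1], by linarith [ht.2]⟩]
    linarith
  rcases lt_or_ge (b + dist T'.q T'.r) t with hrt | htr
  · have hr : T.side₂ (b + dist T'.q T'.r) = T'.r := hT.rotate.side₁_end
    have hr_t : dist T'.r (T.side₂ t) = t - (b + dist T'.q T'.r) := by
      nth_rw 1 [← hr]
      rw [T.geo₂ _ ⟨by linarith, by linarith⟩ t ht₁, abs_sub_comm, abs_of_pos (by linarith)]
    have hspur := hT.add_dist_side₁_le hthin e₁ e₂ e₃ hPQ hQR hRP ⟨hs.1, hs.2.le⟩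
    linarith [dist_triangle (T.side₁ s) T'.r (T.side₂ t), dist_comm (T.side₁ s) T'.r,
      dist_triangle r' y x, dist_comm r' y, dist_comm y x]
  rcases lt_or_ge s a with hsa | has
  · have hs_p : dist (T.side₁ s) T'.p = a - s := by
      rw [← hT.side₁_start, T.geo₁ s hs₁ a ⟨ha, by linarith⟩, abs_of_neg (by linarith)]
      ring
    have hspur : a + dist T'.p (T.side₂ t) ≤ dist p' y :=
      hT.rotate.add_dist_side₁_le hthin.rotate e₂ e₃ e₁ hQR hRP hPQ ⟨ht₁.1, htr⟩
    linarith [dist_triangle (T.side₁ s) T'.p (T.side₂ t), dist_triangle p' x y]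
  · have hs' : s - a ∈ Icc 0 (dist T'.p T'.q) := ⟨by linarith, by linarith [hs.2]⟩
    have ht' : t - b ∈ Icc 0 (dist T'.q T'.r) := ⟨by linarith [ht.1], by linarith⟩
    have hside₁ : T.side₁ s = T'.side₁ (s - a) := by simpa using hT.side₁_core _ hs'
    have hside₂ : T.side₂ t = T'.side₂ (t - b) := by simpa using hT.side₂_core _ ht'
    have hcmp := dist_segPoint_le_dist_segPoint_add ha hb hc hPQ hQR hRP (e₁ ▸ hs') (e₂ ▸ ht')
    rw [add_sub_cancel, add_sub_cancel] at hcmp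
    rw [hside₁, hside₂]
    exact (hthin.dist_side₁_side₂_le e₁ e₂ e₃ hs' ht').trans hcmp

theorem dist_side₁_side₂_le (hT : T.HasCore T' a b c) (hthin : Thin T')
    (h₁ : dist p' q' = dist T.p T.q) (h₂ : dist q' r' = dist T.q T.r)
    (h₃ : dist r' p' = dist T.r T.p) :
    ∀ s ∈ Icc (0:ℝ) (dist T.p T.q), ∀ t ∈ Icc (0:ℝ) (dist T.q T.r),
      dist (T.side₁ s) (T.side₂ t) ≤
        dist (lineMap p' q' (s / dist T.p T.q)) (lineMap q' r' (t / dist T.q T.r)) := by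
  intro s hs t ht
  rw [← h₁, ← h₂]
  change _ ≤ dist (segPoint p' q' s) (segPoint q' r' t)
  by_cases htail : t ≤ b ∨ a + dist T'.p T'.q ≤ s
  · have hxq : dist (segPoint p' q' s) q' = dist T.p T.q - s := by
      rw [dist_segPoint_right (h₁ ▸ hs), h₁]
    have hqy : dist q' (segPoint q' r' t) = t := dist_segPoint_left (h₂ ▸ ht)
    have hvia_q := abs_dist_sub_le (segPoint p' q' s) (segPoint q' r' t) q'
    rwa [hxq, dist_comm _ q', hqy, ← hT.dist_side₁_side₂_of_tail_q hs ht htail] at hvia_q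
  rw [not_or, not_le, not_le] at htail
  obtain ⟨cp, cq, cr, e₁, e₂, e₃⟩ := T'.exists_comparison
  exact hT.dist_side₁_side₂_le_off_tail_q hthin e₁ e₂ e₃ (by rw [h₁, hT.dist_pq, e₁])
    (by rw [h₂, hT.dist_qr, e₂]) (by rw [h₃, hT.dist_rp, e₃]) ⟨hs.1, htail.2⟩ ⟨htail.1, ht.2⟩

theorem thin (hT : T.HasCore T' a b c) (hthin : Thin T') : Thin T := by
  intro p' q' r' h₁ h₂ h₃
  exact ⟨hT.dist_side₁_side₂_le hthin h₁ h₂ h₃,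
    hT.rotate.dist_side₁_side₂_le hthin.rotate h₂ h₃ h₁,
    hT.rotate.rotate.dist_side₁_side₂_le hthin.rotate.rotate h₃ h₁ h₂⟩

end GeodesicTriangle.HasCore

end

theorem thin_of_core_thin_general {X : Type*} [MetricSpace X]
    (T T' : GeodesicTriangle X) (a b c : ℝ)
    (ha : 0 ≤ a) (hb : 0 ≤ b) (hc : 0 ≤ c)
    (hlen₁ : dist T.p T.q = a + dist T'.p T'.q + b)
    (hlen₂ : dist T.q T.r = b + dist T'.q T'.r + c)
    (hlen₃ : dist T.r T.p = c + dist T'.r T'.p + a)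
    (hcore₁ : ∀ t ∈ Set.Icc (0:ℝ) (dist T'.p T'.q), T.side₁ (a + t) = T'.side₁ t)
    (hcore₂ : ∀ t ∈ Set.Icc (0:ℝ) (dist T'.q T'.r), T.side₂ (b + t) = T'.side₂ t)
    (hcore₃ : ∀ t ∈ Set.Icc (0:ℝ) (dist T'.r T'.p), T.side₃ (c + t) = T'.side₃ t)
    (htailp : ∀ t ∈ Set.Icc (0:ℝ) a, T.side₁ t = T.side₃ (dist T.r T.p - t))
    (htailq : ∀ t ∈ Set.Icc (0:ℝ) b, T.side₂ t = T.side₁ (dist T.p T.q - t))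
    (htailr : ∀ t ∈ Set.Icc (0:ℝ) c, T.side₃ t = T.side₂ (dist T.q T.r - t))
    (hthin : Thin T') :
    Thin T :=
  GeodesicTriangle.HasCore.thin
    ⟨ha, hb, hc, hlen₁, hlen₂, hlen₃, hcore₁, hcore₂, hcore₃, htailp, htailq, htailr⟩ hthin

/-- If a geodesic triangle `T` consists of a core geodesic triangle `T'` (with vertices
the bifurcation points `p̄ = T'.p`, `q̄ = T'.q`, `r̄ = T'.r`) together with three
geodesic tails at the vertices, and the core triangle is thin, then `T` is thin. -/
theorem thin_of_core_thin {X : Type*} [MetricSpace X]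
    (T T' : GeodesicTriangle X) (a b c : ℝ)
    (ha : 0 ≤ a) (hb : 0 ≤ b) (hc : 0 ≤ c)
    (hap : dist T.p T'.p = a) (hbq : dist T.q T'.q = b) (hcr : dist T.r T'.r = c)
    (hlen₁ : dist T.p T.q = a + dist T'.p T'.q + b)
    (hlen₂ : dist T.q T.r = b + dist T'.q T'.r + c)
    (hlen₃ : dist T.r T.p = c + dist T'.r T'.p + a)
    (hcore₁ : ∀ t ∈ Set.Icc (0:ℝ) (dist T'.p T'.q), T.side₁ (a + t) = T'.side₁ t)
    (hcore₂ : ∀ t ∈ Set.Icc (0:ℝ) (dist T'.q T'.r), T.side₂ (b + t) = T'.side₂ t)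
    (hcore₃ : ∀ t ∈ Set.Icc (0:ℝ) (dist T'.r T'.p), T.side₃ (c + t) = T'.side₃ t)
    (htailp : ∀ t ∈ Set.Icc (0:ℝ) a, T.side₁ t = T.side₃ (dist T.r T.p - t))
    (htailq : ∀ t ∈ Set.Icc (0:ℝ) b, T.side₂ t = T.side₁ (dist T.p T.q - t))
    (htailr : ∀ t ∈ Set.Icc (0:ℝ) c, T.side₃ t = T.side₂ (dist T.q T.r - t))
    (hthin : Thin T') :
    Thin T :=
  thin_of_core_thin_general T T' a b c ha hb hc hlen₁ hlen₂ hlen₃ hcore₁ hcore₂ hcore₃ htailp htailq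
    htailr hthin
end
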